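/- arXiv:1904.04045 — 5 statements merged into one kernel-verified Lean document; each statement's English description precedes it below -/
import Mathlib

section
/- Let P_{XY} be a probability distribution on a finite space Ω_X × Ω_Y with marginals P_X and P_Y, and let r, s ∈ [1, ∞). Then the following are equivalent: (1) for all functions f : Ω_X → ℝ and g : Ω_Y → ℝ, E_{(X,Y)∼P_{XY}}[f(X)g(Y)] ≤ (E_{X∼P_X}[|f(X)|^r])^{1/r} · (E_{Y∼P_Y}[|g(Y)|^s])^{1/s}; (2) for all probability distributions Q_{XY} absolutely continuous with respect to P_{XY}, with marginals Q_X and Q_Y, one has D(Q_{XY}‖P_{XY}) ≥ D(Q_X‖P_X)/r + D(Q_Y‖P_Y)/s. -/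
open Finset Real

/-!
Both directions rest on the Donsker–Varadhan inequality `E_Q[log w] - log E_P[w] ≤ D(Q‖P)`,
which is an equality at `w = dQ/dP`.

Given `Q`, hypercontractivity tested on `f = (dQ_X/dP_X)^(1/r)` and `g = (dQ_Y/dP_Y)^(1/s)` gives
`E_P[f ⊗ g] ≤ ‖f‖_r ‖g‖_s = 1`, and Donsker–Varadhan with `w = f ⊗ g` yields
`D(Q‖P) ≥ E_Q[log w] = D(Q_X‖P_X)/r + D(Q_Y‖P_Y)/s`.

Conversely, for `f, g ≥ 0` tilt `P` to `Q ∝ P · f ⊗ g`, so that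
`log E_P[f ⊗ g] = E_Q[log f] + E_Q[log g] - D(Q‖P)`. Donsker–Varadhan on the marginals with
`w = f ^ r` and `w = g ^ s` gives `E_Q[log f] - D(Q_X‖P_X)/r ≤ log ‖f‖_r` and the same for `g`,
so the divergence inequality yields `log E_P[f ⊗ g] ≤ log ‖f‖_r + log ‖g‖_s`.
-/

section RelEntropy

variable {ι : Type*}

lemma pos_of_absolutelyContinuous {q p : ι → ℝ} (hp : ∀ i, 0 ≤ p i)
    (hqp : ∀ i, p i = 0 → q i = 0) {i : ι} (hqi : q i ≠ 0) : 0 < p i :=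
  (hp i).lt_of_ne fun h => hqi (hqp i h.symm)

variable [Fintype ι]

/-- A term with `p i = 0` is `q i * log (q i / 0) = 0`, so this is the Kullback–Leibler divergence
`D(q‖p)` whenever `q` is absolutely continuous with respect to `p`. -/
noncomputable def relEntropy (q p : ι → ℝ) : ℝ :=
  ∑ i, q i * log (q i / p i)

lemma sub_le_mul_log_div {q p : ℝ} (hq : 0 < q) (hp : 0 < p) : q - p ≤ q * log (q / p) := by
  have h := one_sub_inv_le_log_of_pos (div_pos hq hp)
  rw [inv_div] at h
  calc q - p = q * (1 - p / q) := by field_simp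
    _ ≤ q * log (q / p) := mul_le_mul_of_nonneg_left h hq.le

lemma sum_mul_div_of_absolutelyContinuous {q p : ι → ℝ} (hqp : ∀ i, p i = 0 → q i = 0) :
    ∑ i, p i * (q i / p i) = ∑ i, q i := by
  refine sum_congr rfl fun i _ => ?_
  by_cases h : p i = 0
  · simp [h, hqp i h]
  · exact mul_div_cancel₀ _ h

lemma sum_mul_pos_of_absolutelyContinuous {q p w : ι → ℝ} (hq1 : ∑ i, q i = 1)
    (hp : ∀ i, 0 ≤ p i) (hqp : ∀ i, p i = 0 → q i = 0) (hw : ∀ i, 0 ≤ w i)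
    (hwq : ∀ i, q i ≠ 0 → 0 < w i) : 0 < ∑ i, p i * w i := by
  obtain ⟨i, -, hi⟩ := exists_ne_zero_of_sum_ne_zero (hq1.trans_ne one_ne_zero)
  exact (mul_pos (pos_of_absolutelyContinuous hp hqp hi) (hwq i hi)).trans_le
    (single_le_sum (fun j _ => mul_nonneg (hp j) (hw j)) (mem_univ i))

/-- The Donsker–Varadhan inequality. -/
theorem sum_mul_log_sub_log_sum_mul_le_relEntropy {q p w : ι → ℝ} (hq : ∀ i, 0 ≤ q i)
    (hq1 : ∑ i, q i = 1) (hp : ∀ i, 0 ≤ p i) (hqp : ∀ i, p i = 0 → q i = 0)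
    (hw : ∀ i, 0 ≤ w i) (hwq : ∀ i, q i ≠ 0 → 0 < w i) :
    ∑ i, q i * log (w i) - log (∑ i, p i * w i) ≤ relEntropy q p := by
  set S := ∑ i, p i * w i
  have hS : 0 < S := sum_mul_pos_of_absolutelyContinuous hq1 hp hqp hw hwq
  -- termwise `q - p' ≤ q log (q / p')` for the tilted weights `p' = p w / S`, which sum to `1`
  have key : ∀ i, q i - p i * w i / S
      ≤ q i * log (q i / p i) - q i * log (w i) + q i * log S := by
    intro i
    by_cases hqi : q i = 0
    · simpa [hqi] using div_nonneg (mul_nonneg (hp i) (hw i)) hS.le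
    have hpi := pos_of_absolutelyContinuous hp hqp hqi
    have hwi := hwq i hqi
    have hqi' := (hq i).lt_of_ne' hqi
    calc q i - p i * w i / S ≤ q i * log (q i / (p i * w i / S)) :=
          sub_le_mul_log_div hqi' (by positivity)
      _ = _ := by
          rw [show q i / (p i * w i / S) = q i / p i / w i * S by field_simp,
            log_mul (by positivity) hS.ne', log_div (by positivity) hwi.ne']
          ring
  have hsum := sum_le_sum fun i (_ : i ∈ univ) => key i
  rw [sum_sub_distrib, ← sum_div, div_self hS.ne', hq1, sum_add_distrib, sum_sub_distrib,
    ← sum_mul, hq1, one_mul] at hsum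
  unfold relEntropy
  linarith

theorem sum_mul_log_sub_log_sum_rpow_div_le {q p f : ι → ℝ} {r : ℝ} (hr : 0 < r)
    (hq : ∀ i, 0 ≤ q i) (hq1 : ∑ i, q i = 1) (hp : ∀ i, 0 ≤ p i)
    (hqp : ∀ i, p i = 0 → q i = 0) (hf : ∀ i, 0 ≤ f i) (hfq : ∀ i, q i ≠ 0 → 0 < f i) :
    ∑ i, q i * log (f i) - log (∑ i, p i * f i ^ r) / r ≤ relEntropy q p / r := by
  have hDV := sum_mul_log_sub_log_sum_mul_le_relEntropy hq hq1 hp hqp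
    (fun i => rpow_nonneg (hf i) r) fun i hi => rpow_pos_of_pos (hfq i hi) r
  have hlog : ∑ i, q i * log (f i ^ r) = r * ∑ i, q i * log (f i) := by
    rw [mul_sum]
    refine sum_congr rfl fun i _ => ?_
    by_cases hqi : q i = 0
    · simp [hqi]
    · rw [log_rpow (hfq i hqi)]
      ring
  rw [hlog] at hDV
  rw [le_div_iff₀ hr]
  calc (∑ i, q i * log (f i) - log (∑ i, p i * f i ^ r) / r) * r
      = r * ∑ i, q i * log (f i) - log (∑ i, p i * f i ^ r) := by field_simp
    _ ≤ relEntropy q p := hDV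

end RelEntropy

section Marginals

variable {α β : Type*}

def fstMarginal [Fintype β] (P : α × β → ℝ) (x : α) : ℝ := ∑ y, P (x, y)

def sndMarginal [Fintype α] (P : α × β → ℝ) (y : β) : ℝ := ∑ x, P (x, y)

variable {P Q : α × β → ℝ}

lemma fstMarginal_nonneg [Fintype β] (hP : ∀ z, 0 ≤ P z) (x : α) : 0 ≤ fstMarginal P x :=
  sum_nonneg fun y _ => hP (x, y)

lemma sndMarginal_nonneg [Fintype α] (hP : ∀ z, 0 ≤ P z) (y : β) : 0 ≤ sndMarginal P y :=
  sum_nonneg fun x _ => hP (x, y)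

lemma fstMarginal_absolutelyContinuous [Fintype β] (hP : ∀ z, 0 ≤ P z)
    (hQP : ∀ z, P z = 0 → Q z = 0) (x : α) (hx : fstMarginal P x = 0) : fstMarginal Q x = 0 :=
  sum_eq_zero fun y _ => hQP (x, y) ((sum_eq_zero_iff_of_nonneg fun y _ => hP (x, y)).1 hx y
    (mem_univ y))

lemma sndMarginal_absolutelyContinuous [Fintype α] (hP : ∀ z, 0 ≤ P z)
    (hQP : ∀ z, P z = 0 → Q z = 0) (y : β) (hy : sndMarginal P y = 0) : sndMarginal Q y = 0 :=
  sum_eq_zero fun x _ => hQP (x, y) ((sum_eq_zero_iff_of_nonneg fun x _ => hP (x, y)).1 hy x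
    (mem_univ x))

lemma fstMarginal_ne_zero [Fintype β] (hQ : ∀ z, 0 ≤ Q z) {z : α × β} (hz : Q z ≠ 0) :
    fstMarginal Q z.1 ≠ 0 :=
  ((hQ z).lt_of_ne' hz |>.trans_le
    (single_le_sum (fun y _ => hQ (z.1, y)) (mem_univ z.2))).ne'

lemma sndMarginal_ne_zero [Fintype α] (hQ : ∀ z, 0 ≤ Q z) {z : α × β} (hz : Q z ≠ 0) :
    sndMarginal Q z.2 ≠ 0 :=
  ((hQ z).lt_of_ne' hz |>.trans_le
    (single_le_sum (fun x _ => hQ (x, z.2)) (mem_univ z.1))).ne'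

lemma fstMarginal_div_pos [Fintype β] (hP : ∀ z, 0 ≤ P z) (hQ : ∀ z, 0 ≤ Q z)
    (hQP : ∀ z, P z = 0 → Q z = 0) {z : α × β} (hz : Q z ≠ 0) :
    0 < fstMarginal Q z.1 / fstMarginal P z.1 :=
  div_pos ((fstMarginal_nonneg hQ _).lt_of_ne' (fstMarginal_ne_zero hQ hz))
    (pos_of_absolutelyContinuous (fstMarginal_nonneg hP)
      (fstMarginal_absolutelyContinuous hP hQP) (fstMarginal_ne_zero hQ hz))

lemma sndMarginal_div_pos [Fintype α] (hP : ∀ z, 0 ≤ P z) (hQ : ∀ z, 0 ≤ Q z)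
    (hQP : ∀ z, P z = 0 → Q z = 0) {z : α × β} (hz : Q z ≠ 0) :
    0 < sndMarginal Q z.2 / sndMarginal P z.2 :=
  div_pos ((sndMarginal_nonneg hQ _).lt_of_ne' (sndMarginal_ne_zero hQ hz))
    (pos_of_absolutelyContinuous (sndMarginal_nonneg hP)
      (sndMarginal_absolutelyContinuous hP hQP) (sndMarginal_ne_zero hQ hz))

variable [Fintype α] [Fintype β]

lemma sum_fstMarginal (P : α × β → ℝ) : ∑ x, fstMarginal P x = ∑ z, P z :=
  (Fintype.sum_prod_type P).symm

lemma sum_sndMarginal (P : α × β → ℝ) : ∑ y, sndMarginal P y = ∑ z, P z :=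
  (Fintype.sum_prod_type_right P).symm

lemma sum_mul_comp_fst (Q : α × β → ℝ) (h : α → ℝ) :
    ∑ z, Q z * h z.1 = ∑ x, fstMarginal Q x * h x := by
  simp only [Fintype.sum_prod_type, fstMarginal, sum_mul]

lemma sum_mul_comp_snd (Q : α × β → ℝ) (h : β → ℝ) :
    ∑ z, Q z * h z.2 = ∑ y, sndMarginal Q y * h y := by
  simp only [Fintype.sum_prod_type_right, sndMarginal, sum_mul]

lemma sum_fstMarginal_mul_div (hP : ∀ z, 0 ≤ P z) (hQP : ∀ z, P z = 0 → Q z = 0) :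
    ∑ x, fstMarginal P x * (fstMarginal Q x / fstMarginal P x) = ∑ z, Q z := by
  rw [sum_mul_div_of_absolutelyContinuous (fstMarginal_absolutelyContinuous hP hQP),
    sum_fstMarginal]

lemma sum_sndMarginal_mul_div (hP : ∀ z, 0 ≤ P z) (hQP : ∀ z, P z = 0 → Q z = 0) :
    ∑ y, sndMarginal P y * (sndMarginal Q y / sndMarginal P y) = ∑ z, Q z := by
  rw [sum_mul_div_of_absolutelyContinuous (sndMarginal_absolutelyContinuous hP hQP),
    sum_sndMarginal]

end Marginals

section Tilt

variable {α β : Type*} [Fintype α] [Fintype β] {P : α × β → ℝ} {f : α → ℝ} {g : β → ℝ}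

noncomputable def tilt (P : α × β → ℝ) (f : α → ℝ) (g : β → ℝ) (z : α × β) : ℝ :=
  P z * f z.1 * g z.2 / ∑ z', P z' * f z'.1 * g z'.2

lemma sum_mul_mul_nonneg (hP : ∀ z, 0 ≤ P z) (hf : ∀ x, 0 ≤ f x) (hg : ∀ y, 0 ≤ g y) :
    0 ≤ ∑ z, P z * f z.1 * g z.2 :=
  sum_nonneg fun z _ => mul_nonneg (mul_nonneg (hP z) (hf _)) (hg _)

lemma tilt_nonneg (hP : ∀ z, 0 ≤ P z) (hf : ∀ x, 0 ≤ f x) (hg : ∀ y, 0 ≤ g y) (z : α × β) :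
    0 ≤ tilt P f g z :=
  div_nonneg (mul_nonneg (mul_nonneg (hP z) (hf _)) (hg _)) (sum_mul_mul_nonneg hP hf hg)

lemma sum_tilt (hE : ∑ z, P z * f z.1 * g z.2 ≠ 0) : ∑ z, tilt P f g z = 1 := by
  simp only [tilt]
  rw [← sum_div, div_self hE]

lemma tilt_eq_zero_of_eq_zero (z : α × β) (hz : P z = 0) : tilt P f g z = 0 := by
  simp [tilt, hz]

lemma pos_of_fstMarginal_tilt_ne_zero (hf : ∀ x, 0 ≤ f x) {x : α}
    (hx : fstMarginal (tilt P f g) x ≠ 0) : 0 < f x :=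
  (hf x).lt_of_ne' fun hfx => hx (by simp [fstMarginal, tilt, hfx])

lemma pos_of_sndMarginal_tilt_ne_zero (hg : ∀ y, 0 ≤ g y) {y : β}
    (hy : sndMarginal (tilt P f g) y ≠ 0) : 0 < g y :=
  (hg y).lt_of_ne' fun hgy => hy (by simp [sndMarginal, tilt, hgy])

lemma relEntropy_tilt (hP : ∀ z, 0 ≤ P z) (hf : ∀ x, 0 ≤ f x) (hg : ∀ y, 0 ≤ g y)
    (hE : 0 < ∑ z, P z * f z.1 * g z.2) :
    relEntropy (tilt P f g) P = ∑ x, fstMarginal (tilt P f g) x * log (f x)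
      + ∑ y, sndMarginal (tilt P f g) y * log (g y) - log (∑ z, P z * f z.1 * g z.2) := by
  set E := ∑ z, P z * f z.1 * g z.2
  set Q := tilt P f g
  have hterm : ∀ z, Q z * log (Q z / P z)
      = Q z * log (f z.1) + Q z * log (g z.2) - Q z * log E := by
    intro z
    by_cases hz : Q z = 0
    · simp [hz]
    have hPz : P z ≠ 0 := fun h => hz (tilt_eq_zero_of_eq_zero z h)
    have hQ := tilt_nonneg hP hf hg
    have hfz := pos_of_fstMarginal_tilt_ne_zero hf (fstMarginal_ne_zero hQ hz)
    have hgz := pos_of_sndMarginal_tilt_ne_zero hg (sndMarginal_ne_zero hQ hz)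
    rw [show Q z / P z = f z.1 * g z.2 / E by simp only [Q, tilt, E]; field_simp,
      log_div (by positivity) hE.ne', log_mul hfz.ne' hgz.ne']
    ring
  rw [relEntropy, sum_congr rfl fun z _ => hterm z, sum_sub_distrib, sum_add_distrib,
    ← sum_mul, sum_tilt hE.ne', one_mul, sum_mul_comp_fst Q (fun x => log (f x)),
    sum_mul_comp_snd Q (fun y => log (g y))]

end Tilt

section Hypercontractivity

variable {α β : Type*} [Fintype α] [Fintype β] {P : α × β → ℝ} {r s : ℝ}

noncomputable def weightedLpNorm {ι : Type*} [Fintype ι] (μ f : ι → ℝ) (r : ℝ) : ℝ :=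
  (∑ i, μ i * |f i| ^ r) ^ (1 / r)

lemma weightedLpNorm_rpow_one_div {ι : Type*} [Fintype ι] (μ : ι → ℝ) {u : ι → ℝ}
    (hu : ∀ i, 0 ≤ u i) (hr : r ≠ 0) :
    weightedLpNorm μ (fun i => u i ^ (1 / r)) r = (∑ i, μ i * u i) ^ (1 / r) := by
  unfold weightedLpNorm
  congr 1
  refine sum_congr rfl fun i _ => ?_
  rw [abs_of_nonneg (rpow_nonneg (hu i) _), ← rpow_mul (hu i), one_div_mul_cancel hr, rpow_one]

def IsHypercontractive (P : α × β → ℝ) (r s : ℝ) : Prop :=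
  ∀ (f : α → ℝ) (g : β → ℝ), ∑ z, P z * f z.1 * g z.2
    ≤ weightedLpNorm (fstMarginal P) f r * weightedLpNorm (sndMarginal P) g s

def HasRelEntropyMarginalBound (P : α × β → ℝ) (r s : ℝ) : Prop :=
  ∀ Q : α × β → ℝ, (∀ z, 0 ≤ Q z) → ∑ z, Q z = 1 → (∀ z, P z = 0 → Q z = 0) →
    relEntropy (fstMarginal Q) (fstMarginal P) / r
      + relEntropy (sndMarginal Q) (sndMarginal P) / s ≤ relEntropy Q P

theorem IsHypercontractive.hasRelEntropyMarginalBound (hP : ∀ z, 0 ≤ P z) (hr : r ≠ 0)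
    (hs : s ≠ 0) (hHC : IsHypercontractive P r s) : HasRelEntropyMarginalBound P r s := by
  intro Q hQ hQ1 hQP
  set u : α → ℝ := fun x => fstMarginal Q x / fstMarginal P x
  set v : β → ℝ := fun y => sndMarginal Q y / sndMarginal P y
  have hu : ∀ x, 0 ≤ u x := fun x =>
    div_nonneg (fstMarginal_nonneg hQ x) (fstMarginal_nonneg hP x)
  have hv : ∀ y, 0 ≤ v y := fun y =>
    div_nonneg (sndMarginal_nonneg hQ y) (sndMarginal_nonneg hP y)
  have hu_pos : ∀ z, Q z ≠ 0 → 0 < u z.1 := fun _ hz => fstMarginal_div_pos hP hQ hQP hz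
  have hv_pos : ∀ z, Q z ≠ 0 → 0 < v z.2 := fun _ hz => sndMarginal_div_pos hP hQ hQP hz
  set w : α × β → ℝ := fun z => u z.1 ^ (1 / r) * v z.2 ^ (1 / s)
  have hw : ∀ z, 0 ≤ w z := fun z => mul_nonneg (rpow_nonneg (hu _) _) (rpow_nonneg (hv _) _)
  have hw_pos : ∀ z, Q z ≠ 0 → 0 < w z := fun z hz =>
    mul_pos (rpow_pos_of_pos (hu_pos z hz) _) (rpow_pos_of_pos (hv_pos z hz) _)
  have hPw : ∑ z, P z * w z ≤ 1 := by
    have h := hHC (fun x => u x ^ (1 / r)) (fun y => v y ^ (1 / s))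
    rw [weightedLpNorm_rpow_one_div _ hu hr, weightedLpNorm_rpow_one_div _ hv hs,
      sum_fstMarginal_mul_div hP hQP, sum_sndMarginal_mul_div hP hQP, hQ1, one_rpow, one_rpow,
      one_mul] at h
    simpa only [w, mul_assoc] using h
  have hQw : ∑ z, Q z * log (w z) = relEntropy (fstMarginal Q) (fstMarginal P) / r
      + relEntropy (sndMarginal Q) (sndMarginal P) / s := by
    have hterm : ∀ z, Q z * log (w z) = Q z * log (u z.1) / r + Q z * log (v z.2) / s := by
      intro z
      by_cases hz : Q z = 0
      · simp [hz]
      rw [log_mul (rpow_pos_of_pos (hu_pos z hz) _).ne' (rpow_pos_of_pos (hv_pos z hz) _).ne',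
        log_rpow (hu_pos z hz), log_rpow (hv_pos z hz)]
      ring
    rw [sum_congr rfl fun z _ => hterm z, sum_add_distrib, ← sum_div, ← sum_div,
      sum_mul_comp_fst Q (fun x => log (u x)), sum_mul_comp_snd Q (fun y => log (v y))]
    rfl
  have hDV := sum_mul_log_sub_log_sum_mul_le_relEntropy hQ hQ1 hP hQP hw hw_pos
  have hlog : log (∑ z, P z * w z) ≤ 0 :=
    log_nonpos (sum_nonneg fun z _ => mul_nonneg (hP z) (hw z)) hPw
  linarith

theorem HasRelEntropyMarginalBound.sum_mul_mul_le (hP : ∀ z, 0 ≤ P z) (hr : 0 < r)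
    (hs : 0 < s) (hKL : HasRelEntropyMarginalBound P r s) {f : α → ℝ} {g : β → ℝ}
    (hf : ∀ x, 0 ≤ f x) (hg : ∀ y, 0 ≤ g y) :
    ∑ z, P z * f z.1 * g z.2 ≤ (∑ x, fstMarginal P x * f x ^ r) ^ (1 / r)
      * (∑ y, sndMarginal P y * g y ^ s) ^ (1 / s) := by
  set A := ∑ x, fstMarginal P x * f x ^ r
  set B := ∑ y, sndMarginal P y * g y ^ s
  rcases (sum_mul_mul_nonneg hP hf hg).eq_or_lt with hE | hE
  · rw [← hE]
    have hA : 0 ≤ A := sum_nonneg fun x _ =>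
      mul_nonneg (fstMarginal_nonneg hP x) (rpow_nonneg (hf x) r)
    have hB : 0 ≤ B := sum_nonneg fun y _ =>
      mul_nonneg (sndMarginal_nonneg hP y) (rpow_nonneg (hg y) s)
    exact mul_nonneg (rpow_nonneg hA _) (rpow_nonneg hB _)
  set Q := tilt P f g
  have hQ : ∀ z, 0 ≤ Q z := tilt_nonneg hP hf hg
  have hQ1 : ∑ z, Q z = 1 := sum_tilt hE.ne'
  have hQP : ∀ z, P z = 0 → Q z = 0 := tilt_eq_zero_of_eq_zero
  have hQX1 : ∑ x, fstMarginal Q x = 1 := by rw [sum_fstMarginal, hQ1]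
  have hQY1 : ∑ y, sndMarginal Q y = 1 := by rw [sum_sndMarginal, hQ1]
  have hQX : ∀ x, fstMarginal Q x ≠ 0 → 0 < f x := fun _ => pos_of_fstMarginal_tilt_ne_zero hf
  have hQY : ∀ y, sndMarginal Q y ≠ 0 → 0 < g y := fun _ => pos_of_sndMarginal_tilt_ne_zero hg
  have hX := sum_mul_log_sub_log_sum_rpow_div_le hr (fstMarginal_nonneg hQ) hQX1
    (fstMarginal_nonneg hP) (fstMarginal_absolutelyContinuous hP hQP) hf hQX
  have hY := sum_mul_log_sub_log_sum_rpow_div_le hs (sndMarginal_nonneg hQ) hQY1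
    (sndMarginal_nonneg hP) (sndMarginal_absolutelyContinuous hP hQP) hg hQY
  have hA : 0 < A := sum_mul_pos_of_absolutelyContinuous hQX1 (fstMarginal_nonneg hP)
    (fstMarginal_absolutelyContinuous hP hQP) (fun x => rpow_nonneg (hf x) r)
    fun x hx => rpow_pos_of_pos (hQX x hx) r
  have hB : 0 < B := sum_mul_pos_of_absolutelyContinuous hQY1 (sndMarginal_nonneg hP)
    (sndMarginal_absolutelyContinuous hP hQP) (fun y => rpow_nonneg (hg y) s)
    fun y hy => rpow_pos_of_pos (hQY y hy) s
  have hlog : log (∑ z, P z * f z.1 * g z.2) ≤ log A / r + log B / s := by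
    have hD := hKL Q hQ hQ1 hQP
    rw [relEntropy_tilt hP hf hg hE] at hD
    linarith
  rw [← log_le_log_iff hE (by positivity), log_mul (by positivity) (by positivity),
    log_rpow hA, log_rpow hB]
  convert hlog using 1
  ring

theorem HasRelEntropyMarginalBound.isHypercontractive (hP : ∀ z, 0 ≤ P z) (hr : 0 < r)
    (hs : 0 < s) (hKL : HasRelEntropyMarginalBound P r s) : IsHypercontractive P r s := by
  intro f g
  calc ∑ z, P z * f z.1 * g z.2 ≤ ∑ z, P z * |f z.1| * |g z.2| :=
        sum_le_sum fun z _ => (le_abs_self _).trans_eq (by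
          rw [abs_mul, abs_mul, abs_of_nonneg (hP z)])
    _ ≤ _ := hKL.sum_mul_mul_le hP hr hs (fun x => abs_nonneg (f x)) fun y => abs_nonneg (g y)

end Hypercontractivity

theorem hypercontractivity_iff_divergence_general
    {ΩX ΩY : Type*} [Fintype ΩX] [Fintype ΩY]
    (P : ΩX × ΩY → ℝ) (hP : ∀ z, 0 ≤ P z)
    (r s : ℝ) (hr : 1 ≤ r) (hs : 1 ≤ s) :
    ((∀ (f : ΩX → ℝ) (g : ΩY → ℝ),
        ∑ z, P z * f z.1 * g z.2
          ≤ (∑ x, (∑ y, P (x, y)) * |f x| ^ r) ^ (1 / r)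
            * (∑ y, (∑ x, P (x, y)) * |g y| ^ s) ^ (1 / s))
      ↔
      (∀ Q : ΩX × ΩY → ℝ, (∀ z, 0 ≤ Q z) → ∑ z, Q z = 1 →
        (∀ z, P z = 0 → Q z = 0) →
        ∑ z, Q z * Real.log (Q z / P z)
          ≥ (∑ x, (∑ y, Q (x, y)) * Real.log ((∑ y, Q (x, y)) / (∑ y, P (x, y)))) / r
            + (∑ y, (∑ x, Q (x, y)) * Real.log ((∑ x, Q (x, y)) / (∑ x, P (x, y)))) / s)) := by
  have hr0 : 0 < r := zero_lt_one.trans_le hr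
  have hs0 : 0 < s := zero_lt_one.trans_le hs
  exact ⟨IsHypercontractive.hasRelEntropyMarginalBound hP hr0.ne' hs0.ne',
    HasRelEntropyMarginalBound.isHypercontractive hP hr0 hs0⟩

/-- Equivalence of `(r,s)`-hypercontractivity of a joint distribution on a finite space
with the KL-divergence inequality `D(Q_XY‖P_XY) ≥ D(Q_X‖P_X)/r + D(Q_Y‖P_Y)/s`. -/
theorem hypercontractivity_iff_divergence
    {ΩX ΩY : Type*} [Fintype ΩX] [Fintype ΩY]
    (P : ΩX × ΩY → ℝ) (hP : ∀ z, 0 ≤ P z) (hP1 : ∑ z, P z = 1)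
    (r s : ℝ) (hr : 1 ≤ r) (hs : 1 ≤ s) :
    ((∀ (f : ΩX → ℝ) (g : ΩY → ℝ),
        ∑ z, P z * f z.1 * g z.2
          ≤ (∑ x, (∑ y, P (x, y)) * |f x| ^ r) ^ (1 / r)
            * (∑ y, (∑ x, P (x, y)) * |g y| ^ s) ^ (1 / s))
      ↔
      (∀ Q : ΩX × ΩY → ℝ, (∀ z, 0 ≤ Q z) → ∑ z, Q z = 1 →
        (∀ z, P z = 0 → Q z = 0) →
        ∑ z, Q z * Real.log (Q z / P z)
          ≥ (∑ x, (∑ y, Q (x, y)) * Real.log ((∑ y, Q (x, y)) / (∑ y, P (x, y)))) / r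
            + (∑ y, (∑ x, Q (x, y)) * Real.log ((∑ x, Q (x, y)) / (∑ x, P (x, y)))) / s)) :=
  hypercontractivity_iff_divergence_general P hP r s hr hs
end

section
/- Let k ∈ ℤ₊ and p, p₁, p₂ ∈ [0,1] be such that pk, p₁k, p₂k are integers and p ≥ p₁p₂. Let X^{(1)},…,X^{(k)} ∈ {0,1}² be i.i.d. random vectors. Then, conditioned on the events ∑_{i∈[k]} X^{(i)} = (p₁k, p₂k) and ∑_{i∈[k]} X^{(i)}_1 X^{(i)}_2 = pk, the probability that for all l ≤ k the prefix sums satisfy ∑_{i∈[l]} X^{(i)} ≥ (p₁l, p₂l) coordinatewise is at least k^{-3}. -/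
/-!
The product measure of an outcome `ω` only depends on the multiset of its coordinates, so it
suffices to map the conditioning event into the target event by a map that permutes
coordinates and has small fibres.

Split `ω` into the word `y` of first coordinates and the words `u`, `v` of second coordinates
read at the ones and at the zeros of `y`. By the cycle lemma every binary word has a rotation
whose prefix densities never fall below its total density. Rotate `y`, `u`, `v` in this way and
reassemble. The first coordinate is then balanced by construction. A prefix of length `l`
picks up `c ≥ p₁ l` letters of `u` and `l - c` letters of `v`, and `u` has density
`p / p₁ ≥ p₂` because `p ≥ p₁ p₂`; this puts at least `p₂ l` ones into the second coordinate.
Since `ω` is recovered from its image together with the three rotation amounts, the map is at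
most `k³`-to-one.
-/

open MeasureTheory

namespace PrefixSums

open List

/-- `r + l - w.length` truncates to `0` when the window does not wrap around. -/
theorem count_take_rotate_add {α : Type*} [BEq α] (w : List α) (a : α) {r l : ℕ}
    (hr : r ≤ w.length) (hl : l ≤ w.length) :
    ((w.rotate r).take l).count a + (w.take r).count a
      = (w.take (r + l)).count a + (w.take (r + l - w.length)).count a := by
  rw [rotate_eq_drop_append_take hr, take_append, take_take, take_add, length_drop,
    show min (l - (w.length - r)) r = r + l - w.length by omega]
  simp only [count_append]
  omega

theorem exists_rotate_count_take_ge (w : List Bool) :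
    ∃ r < max w.length 1, ∀ l ≤ w.length,
      w.count true * l ≤ w.length * ((w.rotate r).take l).count true := by
  set n := w.length
  -- rotate so as to start right after a minimum of the excess of the prefix counts
  let f : ℕ → ℤ := fun j => n * ((w.take j).count true : ℤ) - w.count true * j
  obtain ⟨r, hr, hmin⟩ := Finset.exists_min_image (Finset.range (max n 1)) f ⟨0, by simp⟩
  rw [Finset.mem_range] at hr
  have hmin' : ∀ j ≤ n, f r ≤ f j := by
    intro j hj
    rcases hj.lt_or_eq with hj | rfl
    · exact hmin j (by simp; omega)
    · have hf : f n = f 0 := by simp [f, take_of_length_le le_rfl, n, mul_comm]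
      exact hf ▸ hmin 0 (by simp)
  refine ⟨r, hr, fun l hl => ?_⟩
  have hsplit := count_take_rotate_add w true (r := r) (by omega) hl
  rcases le_or_gt (r + l) n with h | h
  · have hf := hmin' (r + l) h
    rw [show r + l - n = 0 by omega, take_zero, count_nil] at hsplit
    simp only [f] at hf
    zify at hsplit ⊢
    push_cast at hf
    nlinarith
  · have hf := hmin' (r + l - n) (by omega)
    rw [take_of_length_le (show n ≤ r + l by omega)] at hsplit
    simp only [f] at hf
    zify at hsplit ⊢
    push_cast [show n ≤ r + l by omega] at hf
    nlinarith

def sndsWhereFst (b : Bool) (x : List (Bool × Bool)) : List Bool :=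
  (x.filter (·.1 == b)).map Prod.snd

/-- Missing letters of `u`, `v` are read as `false`. -/
def interleave : List Bool → List Bool → List Bool → List (Bool × Bool)
  | [], _, _ => []
  | true :: y, u, v => (true, u.headD false) :: interleave y u.tail v
  | false :: y, u, v => (false, v.headD false) :: interleave y u v.tail

@[simp]
theorem length_sndsWhereFst (b : Bool) (x : List (Bool × Bool)) :
    (sndsWhereFst b x).length = (x.map Prod.fst).count b := by
  rw [sndsWhereFst, length_map, count_eq_countP, countP_map, countP_eq_length_filter]
  rfl

theorem interleave_sndsWhereFst (x : List (Bool × Bool)) :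
    interleave (x.map Prod.fst) (sndsWhereFst true x) (sndsWhereFst false x) = x := by
  induction x with
  | nil => rfl
  | cons p x ih =>
    obtain ⟨_ | _, _⟩ := p <;> simpa [sndsWhereFst, interleave] using ih

@[simp]
theorem map_fst_interleave (y u v : List Bool) : (interleave y u v).map Prod.fst = y := by
  induction y generalizing u v with
  | nil => rfl
  | cons b y ih => cases b <;> simp [interleave, ih]

theorem sndsWhereFst_interleave {y u v : List Bool} (hu : u.length = y.count true)
    (hv : v.length = y.count false) :
    sndsWhereFst true (interleave y u v) = u ∧ sndsWhereFst false (interleave y u v) = v := by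
  induction y generalizing u v with
  | nil => simp_all [interleave, sndsWhereFst]
  | cons b y ih =>
    cases b
    · obtain _ | ⟨c, v⟩ := v
      · simp at hv
      · simpa [interleave, sndsWhereFst] using ih hu (by simpa using hv)
    · obtain _ | ⟨c, u⟩ := u
      · simp at hu
      · simpa [interleave, sndsWhereFst] using ih (by simpa using hu) hv

theorem interleave_perm {y u v : List Bool} (hu : u.length = y.count true)
    (hv : v.length = y.count false) :
    interleave y u v ~ u.map (true, ·) ++ v.map (false, ·) := by
  induction y generalizing u v with
  | nil => simp_all [interleave]
  | cons b y ih =>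
    cases b
    · obtain _ | ⟨c, v⟩ := v
      · simp at hv
      · simpa [interleave] using (ih hu (by simpa using hv)).cons _ |>.trans perm_middle.symm
    · obtain _ | ⟨c, u⟩ := u
      · simp at hu
      · simpa [interleave] using ih (by simpa using hu) hv

theorem count_take_map_snd_interleave (y u v : List Bool) (l : ℕ) :
    (((interleave y u v).map Prod.snd).take l).count true
      = (u.take ((y.take l).count true)).count true
        + (v.take ((y.take l).count false)).count true := by
  induction y generalizing u v l with
  | nil => simp [interleave]
  | cons b y ih =>
    cases l with
    | zero => simp
    | succ l =>
      cases b <;> cases u <;> cases v <;> simp [interleave, ih, count_cons] <;> omega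

noncomputable def cycleShift (w : List Bool) : ℕ :=
  (exists_rotate_count_take_ge w).choose

noncomputable def cycleRotate (w : List Bool) : List Bool :=
  w.rotate (cycleShift w)

theorem cycleShift_lt (w : List Bool) : cycleShift w < max w.length 1 :=
  (exists_rotate_count_take_ge w).choose_spec.1

theorem count_take_cycleRotate_ge (w : List Bool) {l : ℕ} (hl : l ≤ w.length) :
    w.count true * l ≤ w.length * ((cycleRotate w).take l).count true :=
  (exists_rotate_count_take_ge w).choose_spec.2 l hl

theorem cycleRotate_perm (w : List Bool) : cycleRotate w ~ w :=
  rotate_perm _ _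

@[simp]
theorem length_cycleRotate (w : List Bool) : (cycleRotate w).length = w.length :=
  length_rotate _ _

@[simp]
theorem count_cycleRotate (w : List Bool) (b : Bool) : (cycleRotate w).count b = w.count b :=
  (cycleRotate_perm w).count_eq b

theorem eq_of_cycleRotate_eq {w w' : List Bool} (h : cycleRotate w = cycleRotate w')
    (hs : cycleShift w = cycleShift w') : w = w' := by
  rwa [cycleRotate, cycleRotate, hs, rotate_eq_rotate] at h

noncomputable def rebalance (x : List (Bool × Bool)) : List (Bool × Bool) :=
  interleave (cycleRotate (x.map Prod.fst)) (cycleRotate (sndsWhereFst true x))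
    (cycleRotate (sndsWhereFst false x))

noncomputable def rebalanceShifts (x : List (Bool × Bool)) : ℕ × ℕ × ℕ :=
  (cycleShift (x.map Prod.fst), cycleShift (sndsWhereFst true x),
    cycleShift (sndsWhereFst false x))

theorem sndsWhereFst_rebalance (x : List (Bool × Bool)) :
    sndsWhereFst true (rebalance x) = cycleRotate (sndsWhereFst true x) ∧
      sndsWhereFst false (rebalance x) = cycleRotate (sndsWhereFst false x) :=
  sndsWhereFst_interleave (by simp) (by simp)

theorem perm_sndsWhereFst (x : List (Bool × Bool)) :
    x ~ (sndsWhereFst true x).map (true, ·) ++ (sndsWhereFst false x).map (false, ·) := by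
  simpa only [interleave_sndsWhereFst] using
    interleave_perm (length_sndsWhereFst true x) (length_sndsWhereFst false x)

theorem count_map_snd (x : List (Bool × Bool)) :
    (x.map Prod.snd).count true
      = (sndsWhereFst true x).count true + (sndsWhereFst false x).count true := by
  simpa [Function.comp_def] using ((perm_sndsWhereFst x).map Prod.snd).count_eq true

theorem count_map_and (x : List (Bool × Bool)) :
    (x.map fun p => p.1 && p.2).count true = (sndsWhereFst true x).count true := by
  simpa [Function.comp_def, count_replicate] using
    ((perm_sndsWhereFst x).map fun p => p.1 && p.2).count_eq true

theorem rebalance_perm (x : List (Bool × Bool)) : rebalance x ~ x := by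
  refine (interleave_perm ?_ ?_).trans ((((cycleRotate_perm _).map _).append
    ((cycleRotate_perm _).map _)).trans (perm_sndsWhereFst x).symm)
  all_goals simp

@[simp]
theorem length_rebalance (x : List (Bool × Bool)) : (rebalance x).length = x.length :=
  (rebalance_perm x).length_eq

@[simp]
theorem count_map_rebalance {β : Type*} [BEq β] (g : Bool × Bool → β) (b : β)
    (x : List (Bool × Bool)) : ((rebalance x).map g).count b = (x.map g).count b :=
  ((rebalance_perm x).map g).count_eq b

theorem eq_of_rebalance_eq {x x' : List (Bool × Bool)} (h : rebalance x = rebalance x')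
    (hs : rebalanceShifts x = rebalanceShifts x') : x = x' := by
  simp only [rebalanceShifts, Prod.mk.injEq] at hs
  obtain ⟨hy, hu, hv⟩ := hs
  have hfst : cycleRotate (x.map Prod.fst) = cycleRotate (x'.map Prod.fst) := by
    simpa only [rebalance, map_fst_interleave] using congrArg (map Prod.fst) h
  have hu' := (sndsWhereFst_rebalance x).1.symm.trans
    ((congrArg (sndsWhereFst true) h).trans (sndsWhereFst_rebalance x').1)
  have hv' := (sndsWhereFst_rebalance x).2.symm.trans
    ((congrArg (sndsWhereFst false) h).trans (sndsWhereFst_rebalance x').2)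
  rw [← interleave_sndsWhereFst x, ← interleave_sndsWhereFst x', eq_of_cycleRotate_eq hfst hy,
    eq_of_cycleRotate_eq hu' hu, eq_of_cycleRotate_eq hv' hv]

theorem add_mul_add_le_of_densities {M M' a b c c' U V : ℕ} (ha : a ≤ M) (hb : b ≤ M')
    (hc : c ≤ M) (hc' : c' ≤ M') (hU : a * c ≤ M * U) (hV : b * c' ≤ M' * V)
    (hcc : M * (c + c') ≤ (M + M') * c) (hab : M * (a + b) ≤ (M + M') * a) :
    (a + b) * (c + c') ≤ (M + M') * (U + V) := by
  rcases M.eq_zero_or_pos with rfl | hM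
  · obtain rfl : a = 0 := by omega
    obtain rfl : c = 0 := by omega
    nlinarith
  rcases M'.eq_zero_or_pos with rfl | hM'
  · obtain rfl : b = 0 := by omega
    obtain rfl : c' = 0 := by omega
    nlinarith
  have key : M * M' * ((a + b) * (c + c')) ≤ M * M' * ((M + M') * (U + V)) := by
    zify at *
    have hcross : (0:ℤ) ≤ (M' * c - M * c') * (M' * a - M * b) :=
      mul_nonneg (by linarith) (by linarith)
    nlinarith [mul_le_mul_of_nonneg_left hU (by positivity : (0:ℤ) ≤ M' * (M + M')),
      mul_le_mul_of_nonneg_left hV (by positivity : (0:ℤ) ≤ M * (M + M'))]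
  exact Nat.le_of_mul_le_mul_left key (by positivity)

theorem rebalanceShifts_mem {x : List (Bool × Bool)} {k : ℕ} (hk : 0 < k) (hx : x.length ≤ k) :
    rebalanceShifts x ∈ Finset.range k ×ˢ Finset.range k ×ˢ Finset.range k := by
  have hlt (w : List Bool) (hw : w.length ≤ k) : cycleShift w < k :=
    (cycleShift_lt w).trans_le (max_le hw hk)
  have hcount (b : Bool) : (x.map Prod.fst).count b ≤ k := count_le_length.trans (by simpa)
  simp only [rebalanceShifts, Finset.mem_product, Finset.mem_range]
  exact ⟨hlt _ (by simpa), hlt _ (by simpa using hcount true), hlt _ (by simpa using hcount false)⟩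

def IsBalanced (x : List (Bool × Bool)) : Prop :=
  ∀ l ≤ x.length,
    (x.map Prod.fst).count true * l ≤ x.length * ((x.map Prod.fst).take l).count true ∧
    (x.map Prod.snd).count true * l ≤ x.length * ((x.map Prod.snd).take l).count true

theorem isBalanced_rebalance {x : List (Bool × Bool)}
    (hco : (x.map Prod.fst).count true * (x.map Prod.snd).count true
      ≤ (x.map fun p => p.1 && p.2).count true * x.length) :
    IsBalanced (rebalance x) := by
  rw [count_map_snd, count_map_and] at hco
  intro l hl
  rw [length_rebalance] at hl ⊢
  rw [count_map_rebalance, count_map_rebalance, count_map_snd, rebalance, map_fst_interleave,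
    count_take_map_snd_interleave]
  set y := x.map Prod.fst
  set u := sndsWhereFst true x
  set v := sndsWhereFst false x
  set c := ((cycleRotate y).take l).count true
  set c' := ((cycleRotate y).take l).count false
  have hy : y.length = x.length := length_map _
  have hM : u.length = y.count true := length_sndsWhereFst true x
  have hM' : v.length = y.count false := length_sndsWhereFst false x
  have hk : y.count true + y.count false = x.length := by rw [count_true_add_count_false, hy]
  have hcc' : c + c' = l := by
    simp [c, c', count_true_add_count_false, hy, hl]
  have hc : c ≤ y.count true := by
    simpa using (take_sublist l (cycleRotate y)).count_le true
  have hc' : c' ≤ y.count false := by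
    simpa using (take_sublist l (cycleRotate y)).count_le false
  have hfst : y.count true * l ≤ x.length * c := hy ▸ count_take_cycleRotate_ge y (hy ▸ hl)
  refine ⟨hfst, ?_⟩
  have hU := count_take_cycleRotate_ge u (l := c) (by omega)
  have hV := count_take_cycleRotate_ge v (l := c') (by omega)
  rw [← hcc', ← hk]
  refine add_mul_add_le_of_densities (hM ▸ count_le_length) (hM' ▸ count_le_length) hc hc'
    (hM ▸ hU) (hM' ▸ hV) (by rwa [hcc', hk]) (by rw [hk, mul_comm _ (count true u)]; exact hco)

theorem sum_map_ite_eq_count {R : Type*} [AddCommMonoidWithOne R] (x : List Bool) :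
    (x.map fun b => if b then (1 : R) else 0).sum = x.count true := by
  induction x with
  | nil => simp
  | cons b x ih => cases b <;> simp [ih, add_comm]

theorem sum_filter_lt_ite_eq_count_take {α R : Type*} [AddCommMonoidWithOne R] {k : ℕ}
    (ω : Fin k → α) (g : α → Bool) (l : ℕ) :
    ∑ i ∈ Finset.univ.filter (fun i : Fin k => (i : ℕ) < l), (if g (ω i) then (1 : R) else 0)
      = (((List.ofFn ω).map g).take l).count true := by
  rw [← sum_take_ofFn (fun i => if g (ω i) then (1 : R) else 0), ← sum_map_ite_eq_count,
    map_take, map_ofFn, map_ofFn]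
  rfl

theorem sum_ite_eq_count {α R : Type*} [AddCommMonoidWithOne R] {k : ℕ}
    (ω : Fin k → α) (g : α → Bool) :
    ∑ i, (if g (ω i) then (1 : R) else 0) = ((List.ofFn ω).map g).count true := by
  simpa [Finset.filter_true_of_mem, take_of_length_le] using
    sum_filter_lt_ite_eq_count_take (R := R) ω g k

theorem mul_le_natCast_iff_of_natCast_eq {q : ℝ} {m k l c : ℕ} (hk : 0 < k)
    (hm : (m : ℝ) = q * k) : q * l ≤ c ↔ m * l ≤ k * c := by
  rw [← Nat.cast_le (α := ℝ), Nat.cast_mul, Nat.cast_mul, hm, mul_right_comm,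
    mul_comm _ (k : ℝ), mul_le_mul_iff_right₀ (by positivity)]

end PrefixSums

theorem Finset.sum_le_card_nsmul_sum_of_fibers {ι β M : Type*} [AddCommMonoid M] [PartialOrder M]
    [IsOrderedAddMonoid M] [CanonicallyOrderedAdd M]
    {s t : Finset ι} {F : ι → ι} {w : ι → M} (hF : ∀ x ∈ s, F x ∈ t)
    (hw : ∀ x ∈ s, w (F x) = w x) {g : ι → β} {u : Finset β} (hg : ∀ x ∈ s, g x ∈ u)
    (hinj : ∀ x ∈ s, ∀ x' ∈ s, F x = F x' → g x = g x' → x = x') :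
    ∑ x ∈ s, w x ≤ u.card • ∑ y ∈ t, w y := by
  classical
  calc ∑ x ∈ s, w x = ∑ x ∈ s, w (F x) := (Finset.sum_congr rfl hw).symm
    _ = ∑ y ∈ t, (s.filter (F · = y)).card • w y := by
      rw [← Finset.sum_fiberwise_of_maps_to hF]
      refine Finset.sum_congr rfl fun y _ => ?_
      rw [← Finset.sum_const]
      exact Finset.sum_congr rfl fun x hx => by rw [(Finset.mem_filter.1 hx).2]
    _ ≤ ∑ y ∈ t, u.card • w y := by
      refine Finset.sum_le_sum fun y _ => nsmul_le_nsmul_left zero_le ?_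
      refine Finset.card_le_card_of_injOn g (fun x hx => hg x (Finset.mem_filter.1 hx).1) ?_
      intro x hx x' hx' hgx
      simp only [Finset.coe_filter, Set.mem_ofPred_eq] at hx hx'
      exact hinj x hx.1 x' hx'.1 (hx.2.trans hx'.2.symm) hgx
    _ = u.card • ∑ y ∈ t, w y := Finset.smul_sum.symm

theorem pi_le_card_mul_pi_of_perm {α β : Type*} [MeasurableSpace α] [MeasurableSingletonClass α]
    [Fintype α] (μ : Measure α) [SigmaFinite μ] {k : ℕ} {S T : Set (Fin k → α)}
    {Φ : List α → List α} (hperm : ∀ x, (Φ x).Perm x)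
    (hΦ : ∀ ω ∈ S, ∀ ω', List.ofFn ω' = Φ (List.ofFn ω) → ω' ∈ T)
    {g : List α → β} {u : Finset β} (hg : ∀ ω : Fin k → α, g (List.ofFn ω) ∈ u)
    (hinj : ∀ x x', Φ x = Φ x' → g x = g x' → x = x') :
    Measure.pi (fun _ => μ) S ≤ u.card * Measure.pi (fun _ => μ) T := by
  classical
  let F (ω : Fin k → α) : Fin k → α :=
    fun i => (Φ (List.ofFn ω))[i.1]'(by simp [(hperm _).length_eq])
  have hF (ω : Fin k → α) : List.ofFn (F ω) = Φ (List.ofFn ω) :=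
    List.ext_getElem (by simp [(hperm _).length_eq]) fun _ _ _ => by simp [F]
  have hw (ω : Fin k → α) : Measure.pi (fun _ => μ) {F ω} = Measure.pi (fun _ => μ) {ω} := by
    rw [Measure.pi_singleton, Measure.pi_singleton, ← List.prod_ofFn, ← List.prod_ofFn]
    have h := ((hperm (List.ofFn ω)).map fun a => μ {a}).prod_eq
    rw [← hF] at h
    simpa only [List.map_ofFn, Function.comp_def] using h
  rw [← S.coe_toFinset, ← T.coe_toFinset, ← sum_measure_singleton, ← sum_measure_singleton,
    ← nsmul_eq_mul]
  refine Finset.sum_le_card_nsmul_sum_of_fibers (fun ω hω => ?_) (fun ω _ => hw ω)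
    (fun ω _ => hg ω) fun ω _ ω' _ h hg' => List.ofFn_injective ?_
  · simpa using hΦ ω (by simpa using hω) (F ω) (hF ω)
  · exact hinj _ _ (by rw [← hF, ← hF, h]) hg'

open PrefixSums in
theorem prefix_sums_conditional_lower_bound_general
    (k : ℕ) (hk : 0 < k) (p p₁ p₂ : ℝ)
    (hpk : ∃ m : ℕ, (m : ℝ) = p * k)
    (hp1k : ∃ m : ℕ, (m : ℝ) = p₁ * k)
    (hp2k : ∃ m : ℕ, (m : ℝ) = p₂ * k)
    (hcorr : p₁ * p₂ ≤ p)
    (μ : Measure (Bool × Bool)) [IsProbabilityMeasure μ] :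
    ((k : ENNReal) ^ 3)⁻¹ *
      (Measure.pi fun _ : Fin k => μ)
        {ω | (∑ i : Fin k, (if (ω i).1 then (1:ℝ) else 0)) = p₁ * k
            ∧ (∑ i : Fin k, (if (ω i).2 then (1:ℝ) else 0)) = p₂ * k
            ∧ (∑ i : Fin k, (if (ω i).1 && (ω i).2 then (1:ℝ) else 0)) = p * k}
    ≤ (Measure.pi fun _ : Fin k => μ)
        {ω | (∀ l ≤ k,
              p₁ * l ≤ ∑ i ∈ Finset.univ.filter (fun i : Fin k => (i : ℕ) < l),
                  (if (ω i).1 then (1:ℝ) else 0)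
            ∧ p₂ * l ≤ ∑ i ∈ Finset.univ.filter (fun i : Fin k => (i : ℕ) < l),
                  (if (ω i).2 then (1:ℝ) else 0))
          ∧ (∑ i : Fin k, (if (ω i).1 then (1:ℝ) else 0)) = p₁ * k
          ∧ (∑ i : Fin k, (if (ω i).2 then (1:ℝ) else 0)) = p₂ * k
          ∧ (∑ i : Fin k, (if (ω i).1 && (ω i).2 then (1:ℝ) else 0)) = p * k} := by
  obtain ⟨a, ha⟩ := hpk
  obtain ⟨m₁, hm₁⟩ := hp1k
  obtain ⟨m₂, hm₂⟩ := hp2k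
  have hco : m₁ * m₂ ≤ a * k := by
    have : (m₁ * m₂ : ℝ) ≤ a * k := by
      rw [hm₁, hm₂, ha]
      nlinarith [mul_le_mul_of_nonneg_right hcorr (by positivity : (0 : ℝ) ≤ k * k)]
    exact_mod_cast this
  rw [ENNReal.inv_mul_le_iff (by positivity) (by finiteness)]
  have hk3 : (k : ENNReal) ^ 3 = (Finset.range k ×ˢ Finset.range k ×ˢ Finset.range k).card := by
    simp [pow_three]
  rw [hk3]
  refine pi_le_card_mul_pi_of_perm μ rebalance_perm ?_ (fun ω => rebalanceShifts_mem hk (by simp))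
    fun _ _ => eq_of_rebalance_eq
  intro ω hω ω' hω'
  simp only [Set.mem_ofPred_eq, sum_ite_eq_count, sum_filter_lt_ite_eq_count_take,
    sum_ite_eq_count (g := fun p : Bool × Bool => p.1 && p.2), hω', count_map_rebalance] at hω ⊢
  obtain ⟨h₁, h₂, h₃⟩ := hω
  refine ⟨fun l hl => ?_, h₁, h₂, h₃⟩
  rw [← hm₁, Nat.cast_inj] at h₁
  rw [← hm₂, Nat.cast_inj] at h₂
  rw [← ha, Nat.cast_inj] at h₃
  have hbal := isBalanced_rebalance (x := List.ofFn ω) (by rwa [h₁, h₂, h₃, List.length_ofFn]) l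
    (by simpa using hl)
  rw [length_rebalance, count_map_rebalance, count_map_rebalance, h₁, h₂, List.length_ofFn] at hbal
  rwa [mul_le_natCast_iff_of_natCast_eq hk hm₁, mul_le_natCast_iff_of_natCast_eq hk hm₂]

/-- Conditioned on the total counts (fixing both marginal sums and the count of
double-ones), the probability that all prefix sums of an i.i.d. `{0,1}²` walk stay above
the linear lower bounds `(p₁ l, p₂ l)` is at least `k⁻³`
(stated as `ℙ(A ∩ B) ≥ k⁻³ · ℙ(B)`). -/
theorem prefix_sums_conditional_lower_bound
    (k : ℕ) (hk : 0 < k) (p p₁ p₂ : ℝ)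
    (hp : p ∈ Set.Icc (0:ℝ) 1) (hp1 : p₁ ∈ Set.Icc (0:ℝ) 1) (hp2 : p₂ ∈ Set.Icc (0:ℝ) 1)
    (hpk : ∃ m : ℕ, (m : ℝ) = p * k)
    (hp1k : ∃ m : ℕ, (m : ℝ) = p₁ * k)
    (hp2k : ∃ m : ℕ, (m : ℝ) = p₂ * k)
    (hcorr : p₁ * p₂ ≤ p)
    (μ : Measure (Bool × Bool)) [IsProbabilityMeasure μ] :
    ((k : ENNReal) ^ 3)⁻¹ *
      (Measure.pi fun _ : Fin k => μ)
        {ω | (∑ i : Fin k, (if (ω i).1 then (1:ℝ) else 0)) = p₁ * k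
            ∧ (∑ i : Fin k, (if (ω i).2 then (1:ℝ) else 0)) = p₂ * k
            ∧ (∑ i : Fin k, (if (ω i).1 && (ω i).2 then (1:ℝ) else 0)) = p * k}
    ≤ (Measure.pi fun _ : Fin k => μ)
        {ω | (∀ l ≤ k,
              p₁ * l ≤ ∑ i ∈ Finset.univ.filter (fun i : Fin k => (i : ℕ) < l),
                  (if (ω i).1 then (1:ℝ) else 0)
            ∧ p₂ * l ≤ ∑ i ∈ Finset.univ.filter (fun i : Fin k => (i : ℕ) < l),
                  (if (ω i).2 then (1:ℝ) else 0))
          ∧ (∑ i : Fin k, (if (ω i).1 then (1:ℝ) else 0)) = p₁ * k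
          ∧ (∑ i : Fin k, (if (ω i).2 then (1:ℝ) else 0)) = p₂ * k
          ∧ (∑ i : Fin k, (if (ω i).1 && (ω i).2 then (1:ℝ) else 0)) = p * k} :=
  prefix_sums_conditional_lower_bound_general k hk p p₁ p₂ hpk hp1k hp2k hcorr μ
end

section
/- Let k ∈ ℤ₊ and p₁, p₂ ∈ [0,1] with p₁k and p₂k integers, and let p ∈ [0,1] satisfy p ≥ p₁p₂. Let X^{(i)} ∈ {0,1}², i ∈ [k], be i.i.d. with joint probabilities Pr[X=(1,1)]=p, Pr[X=(1,0)]=p₁−p, Pr[X=(0,1)]=p₂−p, Pr[X=(0,0)]=1−p₁−p₂+p. Then Pr[∑_{i∈[k]} X^{(i)} = (p₁k, p₂k) and ∑_{i∈[k]} X^{(i)}_1 X^{(i)}_2 = ⌈pk⌉] ≥ (1/400)·k^{-3.5}. -/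
set_option maxHeartbeats 1600000

open scoped BigOperators
open MeasureTheory
open scoped ENNReal

noncomputable def binR (n t : ℕ) (q : ℝ) : ℝ := (n.choose t : ℝ) * q ^ t * (1 - q) ^ (n - t)

lemma binR_nonneg {n t : ℕ} {q : ℝ} (hq0 : 0 ≤ q) (hq1 : q ≤ 1) : 0 ≤ binR n t q := by
  have h1 : (0:ℝ) ≤ 1 - q := by linarith
  unfold binR
  positivity

lemma binR_sum (n : ℕ) (q : ℝ) : ∑ t ∈ Finset.range (n+1), binR n t q = 1 := by
  calc ∑ t ∈ Finset.range (n+1), binR n t q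
      = ∑ t ∈ Finset.range (n+1), q ^ t * (1-q) ^ (n - t) * (n.choose t : ℝ) := by
        apply Finset.sum_congr rfl; intro t _; unfold binR; ring
    _ = (q + (1-q))^n := (add_pow q (1-q) n).symm
    _ = 1 := by norm_num

lemma binR_step {n j : ℕ} (hj : j < n) (q : ℝ) :
    binR n (j+1) q * ((j+1 : ℕ) : ℝ) * (1 - q) = binR n j q * ((n - j : ℕ) : ℝ) * q := by
  unfold binR
  have hc' : (n.choose (j+1) * (j+1) : ℕ) = n.choose j * (n - j) := Nat.choose_succ_right_eq n j
  have hpow : (1 - q) ^ (n - (j+1)) * (1 - q) = (1 - q) ^ (n - j) := by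
    rw [← pow_succ]; congr 1; omega
  calc (n.choose (j+1) : ℝ) * q ^ (j+1) * (1-q) ^ (n-(j+1)) * ((j+1:ℕ):ℝ) * (1-q)
      = ((n.choose (j+1) * (j+1) : ℕ) : ℝ) * q ^ (j+1) * ((1-q) ^ (n-(j+1)) * (1-q)) := by
        push_cast; ring
    _ = ((n.choose j * (n-j) : ℕ) : ℝ) * q ^ (j+1) * (1-q) ^ (n-j) := by rw [hc', hpow]
    _ = (n.choose j : ℝ) * q ^ j * (1-q) ^ (n-j) * ((n-j:ℕ):ℝ) * q := by
        push_cast; rw [pow_succ]; ring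

lemma binR_step_le {n j : ℕ} {q : ℝ} (hq0 : 0 < q) (hq1 : q < 1) (hj : j < n)
    (h : ((j+1 : ℕ) : ℝ) ≤ (n+1) * q) : binR n j q ≤ binR n (j+1) q := by
  have key := binR_step hj q
  have hd : (0:ℝ) < ((j+1:ℕ):ℝ) * (1 - q) := by
    have : (0:ℝ) < ((j+1:ℕ):ℝ) := by positivity
    nlinarith
  have hnn : 0 ≤ binR n j q := binR_nonneg hq0.le hq1.le
  have hcmp : ((j+1:ℕ):ℝ) * (1 - q) ≤ ((n-j:ℕ):ℝ) * q := by
    have hcast : ((n-j:ℕ):ℝ) = (n:ℝ) - (j:ℝ) := by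
      have := Nat.cast_sub (le_of_lt hj) (R := ℝ); linarith [this]
    rw [hcast]
    push_cast at h ⊢
    linarith
  have h2 : binR n j q * (((j+1:ℕ):ℝ) * (1-q)) ≤ binR n j q * (((n-j:ℕ):ℝ) * q) :=
    mul_le_mul_of_nonneg_left hcmp hnn
  have h3 : binR n j q * (((j+1:ℕ):ℝ) * (1-q)) ≤ binR n (j+1) q * (((j+1:ℕ):ℝ) * (1-q)) := by
    calc binR n j q * (((j+1:ℕ):ℝ) * (1-q)) ≤ binR n j q * (((n-j:ℕ):ℝ) * q) := h2
      _ = binR n (j+1) q * (((j+1:ℕ):ℝ) * (1-q)) := by rw [← mul_assoc, ← mul_assoc, ← key]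
  exact le_of_mul_le_mul_right (by linarith [h3]) hd

lemma binR_step_ge {n j : ℕ} {q : ℝ} (hq0 : 0 < q) (hq1 : q < 1) (hj : j < n)
    (h : (n+1) * q ≤ ((j+1 : ℕ) : ℝ)) : binR n (j+1) q ≤ binR n j q := by
  have key := binR_step hj q
  have hd : (0:ℝ) < ((j+1:ℕ):ℝ) * (1 - q) := by
    have : (0:ℝ) < ((j+1:ℕ):ℝ) := by positivity
    nlinarith
  have hnn : 0 ≤ binR n j q := binR_nonneg hq0.le hq1.le
  have hcmp : ((n-j:ℕ):ℝ) * q ≤ ((j+1:ℕ):ℝ) * (1 - q) := by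
    have hcast : ((n-j:ℕ):ℝ) = (n:ℝ) - (j:ℝ) := by
      have := Nat.cast_sub (le_of_lt hj) (R := ℝ); linarith [this]
    rw [hcast]; push_cast at h ⊢; linarith
  have h2 : binR n (j+1) q * (((j+1:ℕ):ℝ) * (1-q)) ≤ binR n j q * (((j+1:ℕ):ℝ) * (1-q)) := by
    calc binR n (j+1) q * (((j+1:ℕ):ℝ) * (1-q)) = binR n j q * (((n-j:ℕ):ℝ) * q) := by
          rw [← mul_assoc, ← mul_assoc, ← key]
      _ ≤ binR n j q * (((j+1:ℕ):ℝ) * (1-q)) := mul_le_mul_of_nonneg_left hcmp hnn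
  exact le_of_mul_le_mul_right (by linarith [h2]) hd

/-- monotone below M -/
lemma binR_mono {n M : ℕ} {q : ℝ} (hq0 : 0 < q) (hq1 : q < 1) (hMn : M ≤ n)
    (hM : (M:ℝ) ≤ (n+1) * q) : ∀ j, j ≤ M → binR n j q ≤ binR n M q := by
  induction M with
  | zero => intro j hj; interval_cases j; exact le_rfl
  | succ m ih =>
    intro j hj
    rcases Nat.eq_or_lt_of_le hj with rfl | hlt
    · exact le_rfl
    · have hm : m ≤ n := by omega
      have hMm : (m:ℝ) ≤ (n+1)*q := by push_cast at hM ⊢; linarith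
      have h1 : binR n j q ≤ binR n m q := ih hm hMm j (by omega)
      have h2 : binR n m q ≤ binR n (m+1) q := by
        apply binR_step_le hq0 hq1 (by omega)
        push_cast at hM ⊢; linarith
      linarith

/-- antitone above M -/
lemma binR_anti {n M : ℕ} {q : ℝ} (hq0 : 0 < q) (hq1 : q < 1)
    (hM : (n+1) * q ≤ (M:ℝ) + 1) : ∀ j, M ≤ j → j ≤ n → binR n j q ≤ binR n M q := by
  intro j
  induction j with
  | zero => intro h1 _; interval_cases M; exact le_rfl
  | succ m ih =>
    intro h1 h2
    rcases Nat.eq_or_lt_of_le h1 with rfl | hlt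
    · exact le_rfl
    · have : binR n (m+1) q ≤ binR n m q := by
        apply binR_step_ge hq0 hq1 (by omega)
        have : (M:ℝ) ≤ (m:ℝ) := by exact_mod_cast Nat.lt_succ_iff.mp hlt
        push_cast; push_cast at hM; linarith
      have := ih (by omega) (by omega)
      linarith

lemma binR_mode {n : ℕ} {q : ℝ} (hq0 : 0 < q) (hq1 : q < 1) :
    1 / ((n:ℝ)+1) ≤ binR n ((⌊((n:ℝ)+1) * q⌋).toNat) q := by
  set M : ℕ := (⌊((n:ℝ)+1) * q⌋).toNat with hMdef
  have hfl0 : (0:ℤ) ≤ ⌊((n:ℝ)+1) * q⌋ := by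
    apply Int.floor_nonneg.mpr; positivity
  have hMle : (M:ℝ) ≤ ((n:ℝ)+1) * q := by
    rw [hMdef]
    rw [show ((((⌊((n:ℝ)+1) * q⌋).toNat : ℕ)):ℝ) = ((⌊((n:ℝ)+1) * q⌋ : ℤ) : ℝ) by
      exact_mod_cast congrArg (Int.cast : ℤ → ℝ) (Int.toNat_of_nonneg hfl0)]
    exact Int.floor_le _
  have hMgt : ((n:ℝ)+1) * q < (M:ℝ) + 1 := by
    rw [hMdef]
    rw [show ((((⌊((n:ℝ)+1) * q⌋).toNat : ℕ)):ℝ) = ((⌊((n:ℝ)+1) * q⌋ : ℤ) : ℝ) by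
      exact_mod_cast congrArg (Int.cast : ℤ → ℝ) (Int.toNat_of_nonneg hfl0)]
    exact Int.lt_floor_add_one _
  have hMn : M ≤ n := by
    by_contra hcon
    push_neg at hcon
    have : ((n:ℝ)+1) ≤ (M:ℝ) := by exact_mod_cast hcon
    nlinarith
  have hmax : ∀ j, j ≤ n → binR n j q ≤ binR n M q := by
    intro j hj
    rcases le_or_gt j M with h | h
    · exact binR_mono hq0 hq1 hMn hMle j h
    · exact binR_anti hq0 hq1 (le_of_lt hMgt) j h.le hj
  have hsum := binR_sum n q
  have : (1:ℝ) ≤ ((n:ℕ)+1) * binR n M q := by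
    calc (1:ℝ) = ∑ t ∈ Finset.range (n+1), binR n t q := hsum.symm
      _ ≤ ∑ t ∈ Finset.range (n+1), binR n M q := by
          apply Finset.sum_le_sum
          intro i hi
          exact hmax i (by simpa using Nat.lt_succ_iff.mp (Finset.mem_range.mp hi))
      _ = ((n:ℕ)+1) * binR n M q := by
          rw [Finset.sum_const, Finset.card_range]; push_cast; ring
  rw [div_le_iff₀ (by positivity)]
  push_cast at this ⊢
  linarith

lemma binR_ceil {n : ℕ} {q : ℝ} (hq0 : 0 ≤ q) (hq1 : q ≤ 1) :
    min ((n:ℝ)*q) 1 / (2*((n:ℝ)+1)) ≤ binR n ((⌈(n:ℝ)*q⌉).toNat) q := by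
  have hn1 : (0:ℝ) < (n:ℝ)+1 := by positivity
  rcases eq_or_lt_of_le hq0 with h0 | hq0'
  · -- q = 0
    rw [← h0]
    simp only [mul_zero, Int.ceil_zero, Int.toNat_zero]
    unfold binR
    simp only [Nat.choose_zero_right, pow_zero, Nat.sub_zero, sub_zero, one_pow]
    rw [min_comm]
    norm_num
  rcases eq_or_lt_of_le hq1 with h1 | hq1'
  · -- q = 1
    subst h1
    simp only [mul_one, Int.ceil_natCast, Int.toNat_natCast]
    unfold binR
    simp only [Nat.choose_self, Nat.sub_self, pow_zero, sub_self, Nat.cast_one, mul_one, one_mul]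
    have : min ((n:ℝ)) 1 ≤ 1 := min_le_right _ _
    rw [div_le_iff₀ (by positivity), one_pow]
    nlinarith
  -- 0 < q < 1
  set x : ℝ := (n:ℝ)*q with hxdef
  have hx0 : 0 ≤ x := by positivity
  have hxn : x ≤ (n:ℝ) := by nlinarith
  set t : ℕ := (⌈x⌉).toNat with htdef
  set M : ℕ := (⌊((n:ℝ)+1) * q⌋).toNat with hMdef
  clear_value x t M
  have hceil0 : (0:ℤ) ≤ ⌈x⌉ := Int.ceil_nonneg hx0
  have hfl0 : (0:ℤ) ≤ ⌊((n:ℝ)+1) * q⌋ := Int.floor_nonneg.mpr (by positivity)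
  have htR : (t:ℝ) = ((⌈x⌉ : ℤ) : ℝ) := by
    rw [htdef]; exact_mod_cast congrArg (Int.cast : ℤ → ℝ) (Int.toNat_of_nonneg hceil0)
  have hMR : (M:ℝ) = ((⌊((n:ℝ)+1) * q⌋ : ℤ) : ℝ) := by
    rw [hMdef]; exact_mod_cast congrArg (Int.cast : ℤ → ℝ) (Int.toNat_of_nonneg hfl0)
  have hxt : x ≤ (t:ℝ) := by rw [htR]; exact Int.le_ceil x
  have htx : (t:ℝ) < x + 1 := by rw [htR]; exact Int.ceil_lt_add_one x
  have htn : t ≤ n := by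
    have : (⌈x⌉ : ℤ) ≤ (n:ℤ) := Int.ceil_le.mpr (by exact_mod_cast hxn)
    omega
  have hMt : M ≤ t := by
    have h : ⌊((n:ℝ)+1) * q⌋ < ⌈x⌉ + 1 := by
      apply Int.floor_lt.mpr
      push_cast
      have : ((n:ℝ)+1)*q = x + q := by rw [hxdef]; ring
      rw [this]
      have := Int.le_ceil x
      linarith
    omega
  have htM : t ≤ M + 1 := by
    have h1 : ⌈x⌉ ≤ ⌊x⌋ + 1 := Int.ceil_le_floor_add_one x
    have h2 : ⌊x⌋ ≤ ⌊((n:ℝ)+1) * q⌋ := Int.floor_le_floor (by nlinarith)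
    omega
  have hmode : 1 / ((n:ℝ)+1) ≤ binR n M q := by
    rw [hMdef]; exact binR_mode hq0' hq1'
  rcases Nat.eq_or_lt_of_le hMt with hEq | hlt
  · -- t = M
    calc min x 1 / (2*((n:ℝ)+1)) ≤ 1 / ((n:ℝ)+1) := by
          rw [div_le_div_iff₀ (by positivity) (by positivity)]
          have : min x 1 ≤ 1 := min_le_right _ _
          nlinarith
      _ ≤ binR n M q := hmode
      _ = binR n t q := by rw [hEq]
  · -- t = M + 1
    have hteq : t = M + 1 := by omega
    have hMn : M < n := by omega
    have key := binR_step (n := n) (j := M) hMn q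
    rw [← hteq] at key
    have hMx : (M:ℝ) < x := by
      have : (t:ℝ) ≤ x + 1 := htx.le
      have ht1 : (M:ℝ) = (t:ℝ) - 1 := by rw [hteq]; push_cast; ring
      -- M = t-1 and t = ⌈x⌉ < x+1 gives M < x
      rw [ht1]; linarith
    have hnM : (n:ℝ)*(1-q) ≤ ((n-M:ℕ):ℝ) := by
      have : ((n-M:ℕ):ℝ) = (n:ℝ) - (M:ℝ) := by
        rw [Nat.cast_sub hMn.le]
      rw [this]
      nlinarith [hMx]
    have hbM := binR_nonneg (n := n) (t := M) hq0 hq1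
    have hbt := binR_nonneg (n := n) (t := t) hq0 hq1
    -- lower bound for RHS of key
    have h1 : (1/((n:ℝ)+1)) * ((n:ℝ)*(1-q)) * q ≤ binR n M q * ((n-M:ℕ):ℝ) * q := by
      apply mul_le_mul_of_nonneg_right _ hq0
      apply mul_le_mul hmode hnM (by nlinarith) hbM
    -- upper bound for LHS factor
    have h2 : binR n t q * ((t:ℕ):ℝ) * (1-q) ≤ binR n t q * ((x+1)*(1-q)) := by
      rw [mul_assoc]
      apply mul_le_mul_of_nonneg_left _ hbt
      apply mul_le_mul_of_nonneg_right htx.le (by linarith)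
    have h3 : (1/((n:ℝ)+1)) * ((n:ℝ)*(1-q)) * q ≤ binR n t q * ((x+1)*(1-q)) := by
      calc (1/((n:ℝ)+1)) * ((n:ℝ)*(1-q)) * q ≤ binR n M q * ((n-M:ℕ):ℝ) * q := h1
        _ = binR n t q * ((t:ℕ):ℝ) * (1-q) := key.symm
        _ ≤ binR n t q * ((x+1)*(1-q)) := h2
    have hD : (0:ℝ) < (x+1)*(1-q) := by nlinarith
    rw [← div_le_iff₀ hD] at h3
    refine le_trans ?_ h3
    rw [div_le_div_iff₀ (by positivity) hD]
    have e : (1/((n:ℝ)+1)) * ((n:ℝ)*(1-q)) * q * (2*((n:ℝ)+1)) = 2*x*(1-q) := by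
      rw [hxdef]; field_simp
    rw [e]
    have h1q : (0:ℝ) ≤ 1 - q := by linarith
    rcases le_total x 1 with hx1 | hx1
    · rw [min_eq_left hx1]
      have h4 : x*(x+1) ≤ 2*x := by nlinarith [hx0, hx1]
      calc x * ((x+1)*(1-q)) = (x*(x+1))*(1-q) := by ring
        _ ≤ (2*x)*(1-q) := mul_le_mul_of_nonneg_right h4 h1q
        _ = 2*x*(1-q) := by ring
    · rw [min_eq_right hx1]
      have h4 : (1:ℝ)*(x+1) ≤ 2*x := by nlinarith [hx1]
      calc (1:ℝ) * ((x+1)*(1-q)) = ((1:ℝ)*(x+1))*(1-q) := by ring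
        _ ≤ (2*x)*(1-q) := mul_le_mul_of_nonneg_right h4 h1q
        _ = 2*x*(1-q) := by ring

lemma binR_symm {n t : ℕ} (ht : t ≤ n) (q : ℝ) : binR n (n-t) (1-q) = binR n t q := by
  unfold binR
  rw [Nat.choose_symm ht, sub_sub_cancel, Nat.sub_sub_self ht]
  ring

lemma binR_floor {n : ℕ} {q : ℝ} (hq0 : 0 ≤ q) (hq1 : q ≤ 1) :
    min ((n:ℝ)*(1-q)) 1 / (2*((n:ℝ)+1)) ≤ binR n ((⌊(n:ℝ)*q⌋).toNat) q := by
  have h := binR_ceil (n := n) (q := 1-q) (by linarith) (by linarith)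
  have hfl0 : (0:ℤ) ≤ ⌊(n:ℝ)*q⌋ := Int.floor_nonneg.mpr (by positivity)
  have hfln : ⌊(n:ℝ)*q⌋ ≤ (n:ℤ) := by
    have h2 : ((n:ℤ):ℝ) = (n:ℝ) := by push_cast; rfl
    have h1 : ⌊(n:ℝ)*q⌋ ≤ ⌊((n:ℤ):ℝ)⌋ := Int.floor_le_floor (by rw [h2]; nlinarith)
    rwa [Int.floor_intCast] at h1
  have hkey : (⌈(n:ℝ)*(1-q)⌉) = (n:ℤ) - ⌊(n:ℝ)*q⌋ := by
    have he : (n:ℝ)*(1-q) = -((n:ℝ)*q) + ((n:ℤ):ℝ) := by push_cast; ring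
    rw [he, Int.ceil_add_intCast, Int.ceil_neg]
    ring
  have htoNat : (⌈(n:ℝ)*(1-q)⌉).toNat = n - (⌊(n:ℝ)*q⌋).toNat := by omega
  rw [htoNat] at h
  have hle : (⌊(n:ℝ)*q⌋).toNat ≤ n := by omega
  rwa [binR_symm hle q] at h

lemma binR_exact {n m : ℕ} (hn : 1 ≤ n) {q : ℝ} (hq0 : 0 ≤ q) (hq1 : q ≤ 1)
    (hm : (m:ℝ) = (n:ℝ)*q) : 1/(4*(n:ℝ)) ≤ binR n m q := by
  have hceil : (⌈(n:ℝ)*q⌉).toNat = m := by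
    rw [← hm]
    simp
  have h := binR_ceil (n := n) hq0 hq1
  rw [hceil, ← hm] at h
  rcases Nat.eq_zero_or_pos m with rfl | hm1
  · have hmm : (n:ℝ) * q = 0 := by push_cast at hm; linarith
    have hq : q = 0 := by
      rcases mul_eq_zero.mp hmm with h' | h'
      · exfalso; have : (0:ℝ) < n := by positivity
        linarith
      · exact h'
    subst hq
    unfold binR
    simp
    have h1 : (1:ℝ) ≤ (n:ℝ) := by exact_mod_cast hn
    have h2 : (n:ℝ)⁻¹ ≤ 1 := by
      rw [inv_le_one_iff₀]; right; exact h1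
    nlinarith
  · have : min ((m:ℝ)) 1 = 1 := by
      apply min_eq_right
      exact_mod_cast hm1
    rw [this] at h
    refine le_trans ?_ h
    rw [div_le_div_iff₀ (by positivity) (by positivity)]
    have : (1:ℝ) ≤ n := by exact_mod_cast hn
    nlinarith

lemma analytic_main
    (k : ℕ) (hk : 0 < k) (p p₁ p₂ : ℝ)
    (hp1 : p₁ ∈ Set.Icc (0:ℝ) 1) (hp2 : p₂ ∈ Set.Icc (0:ℝ) 1) (hp : p ∈ Set.Icc (0:ℝ) 1)
    (hcorr : p₁ * p₂ ≤ p) (hpp1 : p ≤ p₁) (hpp2 : p ≤ p₂) (hp22 : 0 ≤ 1 - p₁ - p₂ + p)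
    (m₁ m₂ : ℕ) (hm₁ : (m₁:ℝ) = p₁ * k) (hm₂ : (m₂:ℝ) = p₂ * k)
    (a : ℕ) (ha : a = (⌈p * (k:ℝ)⌉).toNat) (c : ℕ) (hc : c = m₂ - a) :
    1/(64*(k:ℝ)^3) ≤ (k.choose m₁ : ℝ) * (m₁.choose a : ℝ) * ((k-m₁).choose c : ℝ)
      * p^a * (p₁-p)^(m₁-a) * (p₂-p)^c * (1-p₁-p₂+p)^(k-m₁-c) := by
  obtain ⟨hp10, hp11⟩ := hp1
  obtain ⟨hp20, hp21⟩ := hp2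
  obtain ⟨hp0, hpone⟩ := hp
  have hkR : (0:ℝ) < k := by exact_mod_cast hk
  have hk1R : (1:ℝ) ≤ k := by exact_mod_cast hk
  -- basic integer facts
  have haInt : (0:ℤ) ≤ ⌈p * (k:ℝ)⌉ := Int.ceil_nonneg (by positivity)
  have haR : (a:ℝ) = ((⌈p * (k:ℝ)⌉ : ℤ) : ℝ) := by
    rw [ha]; exact_mod_cast congrArg (Int.cast : ℤ → ℝ) (Int.toNat_of_nonneg haInt)
  have hpk_le_a : p * k ≤ (a:ℝ) := by rw [haR]; exact Int.le_ceil _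
  have ha_lt : (a:ℝ) < p * k + 1 := by rw [haR]; exact Int.ceil_lt_add_one _
  have ha_le_m₁ : a ≤ m₁ := by
    have h1 : (⌈p * (k:ℝ)⌉ : ℤ) ≤ (m₁ : ℤ) := by
      apply Int.ceil_le.mpr
      push_cast
      rw [hm₁]
      nlinarith
    omega
  have ha_le_m₂ : a ≤ m₂ := by
    have h1 : (⌈p * (k:ℝ)⌉ : ℤ) ≤ (m₂ : ℤ) := by
      apply Int.ceil_le.mpr
      push_cast
      rw [hm₂]
      nlinarith
    omega
  have hm₁k : m₁ ≤ k := by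
    have : (m₁:ℝ) ≤ (k:ℝ) := by rw [hm₁]; nlinarith
    exact_mod_cast this
  have hm₂k : m₂ ≤ k := by
    have : (m₂:ℝ) ≤ (k:ℝ) := by rw [hm₂]; nlinarith
    exact_mod_cast this
  have hm₁c : m₁ + c ≤ k := by
    have h1 : (m₁:ℝ) + m₂ ≤ (k:ℝ) + a := by
      rw [hm₁, hm₂]
      nlinarith
    have h2 : m₁ + m₂ ≤ k + a := by exact_mod_cast h1
    omega
  have hcR : (c:ℝ) = (m₂:ℝ) - a := by
    rw [hc]; push_cast [ha_le_m₂]; ring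
  have hfin : 1/(64*(k:ℝ)^3) ≤ 1/(4*(k:ℝ)) := by
    rw [div_le_div_iff₀ (by positivity) (by positivity)]
    have h3 : (k:ℝ) ≤ (k:ℝ)^3 := by
      nlinarith [mul_nonneg (mul_nonneg hkR.le (sub_nonneg.mpr hk1R))
        (by linarith : (0:ℝ) ≤ (k:ℝ)+1)]
    nlinarith
  -- degenerate cases
  by_cases hp₁0 : p₁ = 0
  · have hpz : p = 0 := le_antisymm (hp₁0 ▸ hpp1) hp0
    have hm₁0 : m₁ = 0 := by
      have : (m₁:ℝ) = 0 := by rw [hm₁, hp₁0]; ring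
      exact_mod_cast this
    have ha0 : a = 0 := by rw [ha, hpz]; simp
    have hc' : c = m₂ := by omega
    rw [hp₁0, hpz, hm₁0, ha0, hc']
    have hbe := binR_exact hk hp20 hp21 (show (m₂:ℝ) = (k:ℝ)*p₂ by rw [hm₂]; ring)
    refine hfin.trans (hbe.trans (le_of_eq ?_))
    unfold binR
    norm_num
  by_cases hp₂0 : p₂ = 0
  · have hpz : p = 0 := le_antisymm (hp₂0 ▸ hpp2) hp0
    have hm₂0 : m₂ = 0 := by
      have : (m₂:ℝ) = 0 := by rw [hm₂, hp₂0]; ring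
      exact_mod_cast this
    have ha0 : a = 0 := by rw [ha, hpz]; simp
    have hc' : c = 0 := by omega
    rw [hp₂0, hpz, hc', ha0]
    have hbe := binR_exact hk hp10 hp11 (show (m₁:ℝ) = (k:ℝ)*p₁ by rw [hm₁]; ring)
    refine hfin.trans (hbe.trans (le_of_eq ?_))
    unfold binR
    norm_num
  by_cases hp₁1 : p₁ = 1
  · have hpe : p = p₂ := le_antisymm hpp2 (by rw [hp₁1] at hp22; linarith)
    have hm₁k' : m₁ = k := by
      have : (m₁:ℝ) = (k:ℝ) := by rw [hm₁, hp₁1]; ring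
      exact_mod_cast this
    have haa : a = m₂ := by
      have h2 : (⌈p * (k:ℝ)⌉ : ℤ) = (m₂:ℤ) := by
        rw [show p * (k:ℝ) = ((m₂:ℤ):ℝ) by push_cast; rw [hm₂, hpe]]
        exact Int.ceil_intCast _
      omega
    have hc' : c = 0 := by omega
    rw [hp₁1, hpe, hm₁k', haa, hc']
    have hbe := binR_exact hk hp20 hp21 (show (m₂:ℝ) = (k:ℝ)*p₂ by rw [hm₂]; ring)
    refine hfin.trans (hbe.trans (le_of_eq ?_))
    unfold binR
    norm_num
  by_cases hp₂1 : p₂ = 1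
  · have hpe : p = p₁ := le_antisymm hpp1 (by rw [hp₂1] at hp22; linarith)
    have hm₂k' : m₂ = k := by
      have : (m₂:ℝ) = (k:ℝ) := by rw [hm₂, hp₂1]; ring
      exact_mod_cast this
    have haa : a = m₁ := by
      have h2 : (⌈p * (k:ℝ)⌉ : ℤ) = (m₁:ℤ) := by
        rw [show p * (k:ℝ) = ((m₁:ℤ):ℝ) by push_cast; rw [hm₁, hpe]]
        exact Int.ceil_intCast _
      omega
    have hc' : c = k - m₁ := by omega
    rw [hp₂1, hpe, haa, hc']
    have hbe := binR_exact hk hp10 hp11 (show (m₁:ℝ) = (k:ℝ)*p₁ by rw [hm₁]; ring)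
    refine hfin.trans (hbe.trans (le_of_eq ?_))
    unfold binR
    norm_num [Nat.sub_self]
  -- generic case
  have hp₁pos : 0 < p₁ := lt_of_le_of_ne hp10 (Ne.symm hp₁0)
  have hp₂pos : 0 < p₂ := lt_of_le_of_ne hp20 (Ne.symm hp₂0)
  have hp₁lt : p₁ < 1 := lt_of_le_of_ne hp11 hp₁1
  have hp₂lt : p₂ < 1 := lt_of_le_of_ne hp21 hp₂1
  have hppos : 0 < p := lt_of_lt_of_le (by nlinarith) hcorr
  have hm₁pos : 1 ≤ m₁ := by
    rcases Nat.eq_zero_or_pos m₁ with h | h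
    · exfalso; rw [h] at hm₁; push_cast at hm₁; nlinarith
    · exact h
  have hm₂pos : 1 ≤ m₂ := by
    rcases Nat.eq_zero_or_pos m₂ with h | h
    · exfalso; rw [h] at hm₂; push_cast at hm₂; nlinarith
    · exact h
  have hm₁lt : m₁ < k := by
    rcases Nat.lt_or_ge m₁ k with h | h
    · exact h
    · exfalso
      have : (k:ℝ) ≤ (m₁:ℝ) := by exact_mod_cast h
      rw [hm₁] at this; nlinarith
  have hm₂lt : m₂ < k := by
    rcases Nat.lt_or_ge m₂ k with h | h
    · exact h
    · exfalso
      have : (k:ℝ) ≤ (m₂:ℝ) := by exact_mod_cast h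
      rw [hm₂] at this; nlinarith
  have h1p₁ : 0 < 1 - p₁ := by linarith
  have hkm₁R : ((k-m₁:ℕ):ℝ) = (k:ℝ) - m₁ := by
    rw [Nat.cast_sub hm₁k]
  have hkm₁pos : 1 ≤ k - m₁ := by omega
  have hkm₁R1 : (1:ℝ) ≤ ((k-m₁:ℕ):ℝ) := by exact_mod_cast hkm₁pos
  have hm₁R1 : (1:ℝ) ≤ (m₁:ℝ) := by exact_mod_cast hm₁pos
  have hm₂R1 : (1:ℝ) ≤ (m₂:ℝ) := by exact_mod_cast hm₂pos
  have hkm₂1 : (m₂:ℝ) + 1 ≤ (k:ℝ) := by exact_mod_cast hm₂lt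
  have hp₁ne : p₁ ≠ 0 := ne_of_gt hp₁pos
  have h1p₁ne : (1:ℝ) - p₁ ≠ 0 := ne_of_gt h1p₁
  have hq₂0 : 0 ≤ p/p₁ := by positivity
  have hq₂1 : p/p₁ ≤ 1 := (div_le_one hp₁pos).mpr hpp1
  have hq₃0 : 0 ≤ (p₂-p)/(1-p₁) := by
    apply div_nonneg (by linarith) (by linarith)
  have hq₃1 : (p₂-p)/(1-p₁) ≤ 1 := (div_le_one h1p₁).mpr (by linarith)
  -- B₁
  have hB1 : 1/(4*(k:ℝ)) ≤ binR k m₁ p₁ :=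
    binR_exact hk hp10 hp11 (by rw [hm₁]; ring)
  -- B₂
  have hB2 : 1/(4*(k:ℝ)) ≤ binR m₁ a (p/p₁) := by
    have harg2 : (m₁:ℝ)*(p/p₁) = p * (k:ℝ) := by
      rw [hm₁]; field_simp
    have hB2' := binR_ceil (n := m₁) (q := p/p₁) hq₂0 hq₂1
    rw [harg2, ← ha] at hB2'
    have hmin2 : (m₁:ℝ)/(k:ℝ) ≤ min (p*(k:ℝ)) 1 := by
      apply le_min
      · rw [div_le_iff₀ hkR]
        have hcc := mul_le_mul_of_nonneg_right hcorr
          (by positivity : (0:ℝ) ≤ (k:ℝ)*(k:ℝ))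
        nlinarith [hcc, hm₁, hm₂, hm₂R1, hm₁R1, hkR]
      · rw [div_le_one hkR]; exact_mod_cast hm₁k
    calc 1/(4*(k:ℝ)) ≤ ((m₁:ℝ)/(k:ℝ))/(2*((m₁:ℝ)+1)) := by
          rw [div_le_div_iff₀ (by positivity) (by positivity)]
          have he : (m₁:ℝ)/(k:ℝ)*(4*(k:ℝ)) = 4*(m₁:ℝ) := by field_simp
          rw [he]; linarith
      _ ≤ min (p*(k:ℝ)) 1 / (2*((m₁:ℝ)+1)) := by gcongr
      _ ≤ binR m₁ a (p/p₁) := hB2'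
  -- B₃
  have hfl : (⌊((k-m₁:ℕ):ℝ)*((p₂-p)/(1-p₁))⌋) = (m₂:ℤ) - ⌈p*(k:ℝ)⌉ := by
    rw [show ((k-m₁:ℕ):ℝ)*((p₂-p)/(1-p₁)) = -(p*(k:ℝ)) + ((m₂:ℤ):ℝ) from by
      rw [hkm₁R, hm₁]
      push_cast
      rw [hm₂]
      field_simp
      ring]
    rw [Int.floor_add_intCast, Int.floor_neg]
    ring
  have hcInt : (⌊((k-m₁:ℕ):ℝ)*((p₂-p)/(1-p₁))⌋).toNat = c := by omega
  have hB3 : 1/(4*(k:ℝ)) ≤ binR (k-m₁) c ((p₂-p)/(1-p₁)) := by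
    have hB3' := binR_floor (n := k-m₁) (q := (p₂-p)/(1-p₁)) hq₃0 hq₃1
    rw [hcInt] at hB3'
    have hmin3 : ((k-m₁:ℕ):ℝ)/(k:ℝ) ≤ min (((k-m₁:ℕ):ℝ)*(1-(p₂-p)/(1-p₁))) 1 := by
      apply le_min
      · have he : ((k-m₁:ℕ):ℝ)*(1-(p₂-p)/(1-p₁)) = (k:ℝ)*(1-p₁-p₂+p) := by
          rw [hkm₁R, hm₁]; field_simp; ring
        have he2 : ((k-m₁:ℕ):ℝ)/(k:ℝ) = 1-p₁ := by
          rw [hkm₁R, hm₁]; field_simp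
        rw [he, he2]
        have hq4 : (1-p₁)*(1-p₂) ≤ 1-p₁-p₂+p := by nlinarith [hcorr]
        have hf2 : (k:ℝ)*(1-p₂) = (k:ℝ) - m₂ := by rw [hm₂]; ring
        have hstep : (k:ℝ)*((1-p₁)*(1-p₂)) ≤ (k:ℝ)*(1-p₁-p₂+p) :=
          mul_le_mul_of_nonneg_left hq4 hkR.le
        have h4 : (1:ℝ) ≤ (k:ℝ)*(1-p₂) := by rw [hf2]; linarith
        have h5 : (1-p₁)*1 ≤ (1-p₁)*((k:ℝ)*(1-p₂)) :=
          mul_le_mul_of_nonneg_left h4 h1p₁.le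
        have h6 : (1-p₁)*((k:ℝ)*(1-p₂)) = (k:ℝ)*((1-p₁)*(1-p₂)) := by ring
        linarith [hstep]
      · rw [div_le_one hkR, hkm₁R]
        have : (0:ℝ) ≤ (m₁:ℝ) := by positivity
        linarith
    calc 1/(4*(k:ℝ)) ≤ (((k-m₁:ℕ):ℝ)/(k:ℝ))/(2*(((k-m₁:ℕ):ℝ)+1)) := by
          rw [div_le_div_iff₀ (by positivity) (by positivity)]
          have he : ((k-m₁:ℕ):ℝ)/(k:ℝ)*(4*(k:ℝ)) = 4*((k-m₁:ℕ):ℝ) := by field_simp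
          rw [he]; linarith
      _ ≤ min (((k-m₁:ℕ):ℝ)*(1-(p₂-p)/(1-p₁))) 1 / (2*(((k-m₁:ℕ):ℝ)+1)) := by gcongr
      _ ≤ binR (k-m₁) c ((p₂-p)/(1-p₁)) := hB3'
  -- factorization
  have hsplit1 : p₁^m₁ = p₁^a * p₁^(m₁-a) := by rw [← pow_add]; congr 1; omega
  have hsplit2 : ((1:ℝ)-p₁)^(k-m₁) = (1-p₁)^c * (1-p₁)^(k-m₁-c) := by
    rw [← pow_add]; congr 1; omega
  have hi1 : binR m₁ a (p/p₁) * p₁^m₁ = (m₁.choose a : ℝ) * (p^a * (p₁-p)^(m₁-a)) := by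
    unfold binR
    rw [show (1 - p/p₁) = (p₁-p)/p₁ from by field_simp]
    rw [div_pow, div_pow, hsplit1]
    field_simp
  have hi2 : binR (k-m₁) c ((p₂-p)/(1-p₁)) * (1-p₁)^(k-m₁)
      = ((k-m₁).choose c : ℝ) * ((p₂-p)^c * (1-p₁-p₂+p)^(k-m₁-c)) := by
    unfold binR
    rw [show (1 - (p₂-p)/(1-p₁)) = (1-p₁-p₂+p)/(1-p₁) from by field_simp; ring]
    rw [div_pow, div_pow, hsplit2]
    field_simp
  have hfact : (k.choose m₁ : ℝ) * (m₁.choose a : ℝ) * ((k-m₁).choose c : ℝ)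
        * p^a * (p₁-p)^(m₁-a) * (p₂-p)^c * (1-p₁-p₂+p)^(k-m₁-c)
      = binR k m₁ p₁ * binR m₁ a (p/p₁) * binR (k-m₁) c ((p₂-p)/(1-p₁)) := by
    have hne : p₁^m₁ * ((1:ℝ)-p₁)^(k-m₁) ≠ 0 := by positivity
    apply mul_right_cancel₀ hne
    symm
    calc binR k m₁ p₁ * binR m₁ a (p/p₁) * binR (k-m₁) c ((p₂-p)/(1-p₁))
          * (p₁^m₁ * ((1:ℝ)-p₁)^(k-m₁))
        = binR k m₁ p₁ * ((binR m₁ a (p/p₁) * p₁^m₁)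
            * (binR (k-m₁) c ((p₂-p)/(1-p₁)) * (1-p₁)^(k-m₁))) := by ring
      _ = binR k m₁ p₁ * (((m₁.choose a : ℝ) * (p^a * (p₁-p)^(m₁-a)))
            * (((k-m₁).choose c : ℝ) * ((p₂-p)^c * (1-p₁-p₂+p)^(k-m₁-c)))) := by
          rw [hi1, hi2]
      _ = _ := by unfold binR; ring
  rw [hfact]
  have hbn1 : (0:ℝ) ≤ binR k m₁ p₁ := binR_nonneg hp10 hp11
  have hbn2 : (0:ℝ) ≤ binR m₁ a (p/p₁) := binR_nonneg hq₂0 hq₂1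
  calc 1/(64*(k:ℝ)^3) = 1/(4*(k:ℝ)) * (1/(4*(k:ℝ))) * (1/(4*(k:ℝ))) := by ring
    _ ≤ binR k m₁ p₁ * binR m₁ a (p/p₁) * binR (k-m₁) c ((p₂-p)/(1-p₁)) := by
        apply mul_le_mul (mul_le_mul hB1 hB2 (by positivity) hbn1) hB3 (by positivity)
        exact mul_nonneg hbn1 hbn2


/-- For i.i.d. 2-dimensional Bernoulli vectors with probability matrix
`[[p, p₁-p],[p₂-p, 1-p₁-p₂+p]]` (positively correlated, `p ≥ p₁p₂`, `p₁k, p₂k ∈ ℤ`),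
the probability of hitting the exact counts `(p₁k, p₂k)` with `⌈pk⌉` double-ones is at
least `(1/400)·k^{-3.5}`. -/
theorem hitting_the_mean
    (k : ℕ) (hk : 0 < k) (p p₁ p₂ : ℝ)
    (hp1 : p₁ ∈ Set.Icc (0:ℝ) 1) (hp2 : p₂ ∈ Set.Icc (0:ℝ) 1) (hp : p ∈ Set.Icc (0:ℝ) 1)
    (hp1k : ∃ m : ℕ, (m : ℝ) = p₁ * k)
    (hp2k : ∃ m : ℕ, (m : ℝ) = p₂ * k)
    (hcorr : p₁ * p₂ ≤ p)
    (hpp1 : p ≤ p₁) (hpp2 : p ≤ p₂) (hp22 : 0 ≤ 1 - p₁ - p₂ + p)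
    (μ : Measure (Bool × Bool)) [IsProbabilityMeasure μ]
    (h11 : μ {(true, true)} = ENNReal.ofReal p)
    (h10 : μ {(true, false)} = ENNReal.ofReal (p₁ - p))
    (h01 : μ {(false, true)} = ENNReal.ofReal (p₂ - p))
    (h00 : μ {(false, false)} = ENNReal.ofReal (1 - p₁ - p₂ + p)) :
    ENNReal.ofReal ((1 / 400) * (k : ℝ) ^ (-(3.5 : ℝ)))
      ≤ (Measure.pi fun _ : Fin k => μ)
          {ω | (∑ i : Fin k, (if (ω i).1 then (1:ℝ) else 0)) = p₁ * k
              ∧ (∑ i : Fin k, (if (ω i).2 then (1:ℝ) else 0)) = p₂ * k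
              ∧ (∑ i : Fin k, (if (ω i).1 && (ω i).2 then (1:ℝ) else 0))
                  = ((⌈p * k⌉ : ℤ) : ℝ)} := by
  classical
  obtain ⟨hp10, hp11⟩ := hp1
  obtain ⟨hp20, hp21⟩ := hp2
  obtain ⟨hp0, hpone⟩ := hp
  obtain ⟨m₁, hm₁⟩ := hp1k
  obtain ⟨m₂, hm₂⟩ := hp2k
  have hkR : (0:ℝ) < k := by exact_mod_cast hk
  set a : ℕ := (⌈p * (k:ℝ)⌉).toNat with ha
  set c : ℕ := m₂ - a with hc
  have haInt : (0:ℤ) ≤ ⌈p * (k:ℝ)⌉ := Int.ceil_nonneg (by positivity)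
  have haR : (a:ℝ) = ((⌈p * (k:ℝ)⌉ : ℤ) : ℝ) := by
    rw [ha]; exact_mod_cast congrArg (Int.cast : ℤ → ℝ) (Int.toNat_of_nonneg haInt)
  have ha_le_m₁ : a ≤ m₁ := by
    have h1 : (⌈p * (k:ℝ)⌉ : ℤ) ≤ (m₁ : ℤ) := by
      apply Int.ceil_le.mpr; push_cast; rw [hm₁]; nlinarith
    omega
  have ha_le_m₂ : a ≤ m₂ := by
    have h1 : (⌈p * (k:ℝ)⌉ : ℤ) ≤ (m₂ : ℤ) := by
      apply Int.ceil_le.mpr; push_cast; rw [hm₂]; nlinarith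
    omega
  have hm₁k : m₁ ≤ k := by
    have : (m₁:ℝ) ≤ (k:ℝ) := by rw [hm₁]; nlinarith
    exact_mod_cast this
  have hm₂k : m₂ ≤ k := by
    have : (m₂:ℝ) ≤ (k:ℝ) := by rw [hm₂]; nlinarith
    exact_mod_cast this
  have hm₁c : m₁ + c ≤ k := by
    have h1 : (m₁:ℝ) + m₂ ≤ (k:ℝ) + a := by
      rw [hm₁, hm₂]; nlinarith [haR, Int.le_ceil (p * (k:ℝ)), haR ▸ Int.le_ceil (p * (k:ℝ))]
    have h2 : m₁ + m₂ ≤ k + a := by exact_mod_cast h1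
    omega
  -- the injection
  set Φ : Finset (Fin k) → Finset (Fin k) → Finset (Fin k) → (Fin k → Bool × Bool) :=
    fun S A C i => (decide (i ∈ S), decide (i ∈ A ∪ C)) with hΦ
  set T : Finset (Σ _ : Finset (Fin k), Σ _ : Finset (Fin k), Finset (Fin k)) :=
    (Finset.univ.powersetCard m₁).sigma
      (fun S => (S.powersetCard a).sigma (fun _ => (Sᶜ).powersetCard c)) with hT
  set F : Finset (Fin k → Bool × Bool) := T.image (fun x => Φ x.1 x.2.1 x.2.2) with hF
  -- membership facts for T
  have hmemT : ∀ x ∈ T, x.1.card = m₁ ∧ x.2.1 ⊆ x.1 ∧ x.2.1.card = a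
      ∧ x.2.2 ⊆ x.1ᶜ ∧ x.2.2.card = c := by
    intro x hx
    rw [hT] at hx
    obtain ⟨hS, hx2⟩ := Finset.mem_sigma.mp hx
    obtain ⟨hA, hC⟩ := Finset.mem_sigma.mp hx2
    obtain ⟨hSsub, hScard⟩ := Finset.mem_powersetCard.mp hS
    obtain ⟨hAsub, hAcard⟩ := Finset.mem_powersetCard.mp hA
    obtain ⟨hCsub, hCcard⟩ := Finset.mem_powersetCard.mp hC
    exact ⟨hScard, hAsub, hAcard, hCsub, hCcard⟩
  set V : ℝ≥0∞ := ENNReal.ofReal p ^ a * (ENNReal.ofReal (p₁-p) ^ (m₁-a)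
      * (ENNReal.ofReal (p₂-p) ^ c * ENNReal.ofReal (1-p₁-p₂+p) ^ (k-m₁-c))) with hV
  -- each singleton has measure V
  have hsingle : ∀ x ∈ T, (Measure.pi fun _ : Fin k => μ) {Φ x.1 x.2.1 x.2.2} = V := by
    intro x hx
    obtain ⟨hScard, hAsub, hAcard, hCsub, hCcard⟩ := hmemT x hx
    have hone : ({Φ x.1 x.2.1 x.2.2} : Set (Fin k → Bool × Bool))
        = Set.univ.pi (fun i => {Φ x.1 x.2.1 x.2.2 i}) := by
      ext g
      simp [Set.mem_pi, funext_iff, eq_comm]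
    rw [hone, Measure.pi_pi]
    have e1 : ∀ i ∈ x.2.1, μ {Φ x.1 x.2.1 x.2.2 i} = ENNReal.ofReal p := by
      intro i hi
      have h1 : i ∈ x.1 := hAsub hi
      have : Φ x.1 x.2.1 x.2.2 i = (true, true) := by simp [hΦ, h1, hi]
      rw [this, h11]
    have e2 : ∀ i ∈ x.1 \ x.2.1, μ {Φ x.1 x.2.1 x.2.2 i} = ENNReal.ofReal (p₁-p) := by
      intro i hi
      obtain ⟨hiS, hiA⟩ := Finset.mem_sdiff.mp hi
      have hiC : i ∉ x.2.2 := fun hic => (Finset.mem_compl.mp (hCsub hic)) hiS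
      have : Φ x.1 x.2.1 x.2.2 i = (true, false) := by simp [hΦ, hiS, hiA, hiC]
      rw [this, h10]
    have e3 : ∀ i ∈ x.2.2, μ {Φ x.1 x.2.1 x.2.2 i} = ENNReal.ofReal (p₂-p) := by
      intro i hi
      have hiS : i ∉ x.1 := Finset.mem_compl.mp (hCsub hi)
      have : Φ x.1 x.2.1 x.2.2 i = (false, true) := by simp [hΦ, hiS, hi]
      rw [this, h01]
    have e4 : ∀ i ∈ x.1ᶜ \ x.2.2, μ {Φ x.1 x.2.1 x.2.2 i} = ENNReal.ofReal (1-p₁-p₂+p) := by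
      intro i hi
      obtain ⟨hiSc, hiC⟩ := Finset.mem_sdiff.mp hi
      have hiS : i ∉ x.1 := Finset.mem_compl.mp hiSc
      have hiA : i ∉ x.2.1 := fun hia => hiS (hAsub hia)
      have : Φ x.1 x.2.1 x.2.2 i = (false, false) := by simp [hΦ, hiS, hiA, hiC]
      rw [this, h00]
    have hcardSA : (x.1 \ x.2.1).card = m₁ - a := by
      rw [Finset.card_sdiff_of_subset hAsub, hScard, hAcard]
    have hcardSc : (x.1ᶜ \ x.2.2).card = k - m₁ - c := by
      rw [Finset.card_sdiff_of_subset hCsub, Finset.card_compl, Fintype.card_fin, hScard, hCcard]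
    calc ∏ i : Fin k, μ {Φ x.1 x.2.1 x.2.2 i}
        = (∏ i ∈ x.1, μ {Φ x.1 x.2.1 x.2.2 i})
            * ∏ i ∈ x.1ᶜ, μ {Φ x.1 x.2.1 x.2.2 i} :=
          (Finset.prod_mul_prod_compl x.1 _).symm
      _ = ((∏ i ∈ x.1 \ x.2.1, μ {Φ x.1 x.2.1 x.2.2 i})
            * ∏ i ∈ x.2.1, μ {Φ x.1 x.2.1 x.2.2 i})
            * ((∏ i ∈ x.1ᶜ \ x.2.2, μ {Φ x.1 x.2.1 x.2.2 i})
            * ∏ i ∈ x.2.2, μ {Φ x.1 x.2.1 x.2.2 i}) := by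
          rw [Finset.prod_sdiff hAsub, Finset.prod_sdiff hCsub]
      _ = (ENNReal.ofReal (p₁-p) ^ (m₁-a) * ENNReal.ofReal p ^ a)
            * (ENNReal.ofReal (1-p₁-p₂+p) ^ (k-m₁-c) * ENNReal.ofReal (p₂-p) ^ c) := by
          rw [Finset.prod_congr rfl e1, Finset.prod_congr rfl e2,
            Finset.prod_congr rfl e3, Finset.prod_congr rfl e4,
            Finset.prod_const, Finset.prod_const, Finset.prod_const, Finset.prod_const,
            hAcard, hCcard, hcardSA, hcardSc]
      _ = V := by rw [hV]; ring
  -- injectivity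
  have hinj : ∀ x ∈ T, ∀ y ∈ T,
      Φ x.1 x.2.1 x.2.2 = Φ y.1 y.2.1 y.2.2 → x = y := by
    intro x hx y hy heq
    obtain ⟨hScx, hAsx, hAcx, hCsx, hCcx⟩ := hmemT x hx
    obtain ⟨hScy, hAsy, hAcy, hCsy, hCcy⟩ := hmemT y hy
    have hfst : ∀ i, (i ∈ x.1 ↔ i ∈ y.1) := by
      intro i
      have h := congrArg (fun f => (f i).1) heq
      simp only [hΦ] at h
      exact decide_eq_decide.mp h
    have hSeq : x.1 = y.1 := Finset.ext hfst
    have hsnd : ∀ i, (i ∈ x.2.1 ∪ x.2.2 ↔ i ∈ y.2.1 ∪ y.2.2) := by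
      intro i
      have h := congrArg (fun f => (f i).2) heq
      simp only [hΦ] at h
      exact decide_eq_decide.mp h
    have hAeq : x.2.1 = y.2.1 := by
      apply Finset.ext
      intro i
      constructor
      · intro hi
        rcases Finset.mem_union.mp ((hsnd i).mp (Finset.mem_union_left _ hi)) with h' | h'
        · exact h'
        · exfalso
          exact (Finset.mem_compl.mp (hCsy h')) (hSeq ▸ hAsx hi)
      · intro hi
        rcases Finset.mem_union.mp ((hsnd i).mpr (Finset.mem_union_left _ hi)) with h' | h'
        · exact h'
        · exfalso
          exact (Finset.mem_compl.mp (hCsx h')) (hSeq.symm ▸ hAsy hi)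
    have hCeq : x.2.2 = y.2.2 := by
      apply Finset.ext
      intro i
      constructor
      · intro hi
        rcases Finset.mem_union.mp ((hsnd i).mp (Finset.mem_union_right _ hi)) with h' | h'
        · exfalso
          exact (Finset.mem_compl.mp (hCsx hi)) (hSeq.symm ▸ hAsy h')
        · exact h'
      · intro hi
        rcases Finset.mem_union.mp ((hsnd i).mpr (Finset.mem_union_right _ hi)) with h' | h'
        · exfalso
          exact (Finset.mem_compl.mp (hCsy hi)) (hSeq ▸ hAsx h')
        · exact h'
    obtain ⟨S₁, A₁, C₁⟩ := x
    obtain ⟨S₂, A₂, C₂⟩ := y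
    simp only at hSeq hAeq hCeq
    subst hSeq; subst hAeq; subst hCeq
    rfl
  -- cardinality of T
  have hcardT : T.card = k.choose m₁ * (m₁.choose a * (k-m₁).choose c) := by
    rw [hT, Finset.card_sigma]
    have hstep : ∀ S : Finset (Fin k), S ∈ Finset.univ.powersetCard m₁ →
        ((S.powersetCard a).sigma fun _ => (Sᶜ).powersetCard c).card
          = m₁.choose a * (k-m₁).choose c := by
      intro S hS
      obtain ⟨_, hScard⟩ := Finset.mem_powersetCard.mp hS
      rw [Finset.card_sigma]
      have hc1 : ∀ A ∈ S.powersetCard a, ((Sᶜ).powersetCard c).card = (k-m₁).choose c := by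
        intro A _
        rw [Finset.card_powersetCard, Finset.card_compl, Fintype.card_fin, hScard]
      rw [Finset.sum_congr rfl hc1, Finset.sum_const, Finset.card_powersetCard, hScard,
        smul_eq_mul]
    rw [Finset.sum_congr rfl hstep, Finset.sum_const, Finset.card_powersetCard,
      Finset.card_univ, Fintype.card_fin, smul_eq_mul]
  -- measure of F
  have hmeasF : (Measure.pi fun _ : Fin k => μ) ↑F = (T.card : ℝ≥0∞) * V := by
    have hFU : (↑F : Set (Fin k → Bool × Bool)) = ⋃ f ∈ F, ({f} : Set _) := by ext g; simp
    rw [hFU, measure_biUnion_finset ?_ ?_]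
    · rw [hF, Finset.sum_image hinj, Finset.sum_congr rfl hsingle, Finset.sum_const,
        nsmul_eq_mul]
    · intro u hu v hv huv
      exact Set.disjoint_singleton.mpr huv
    · intro b _
      exact measurableSet_singleton b
  -- F is contained in the event
  have hsub : (↑F : Set (Fin k → Bool × Bool)) ⊆
      {ω | (∑ i : Fin k, (if (ω i).1 then (1:ℝ) else 0)) = p₁ * k
          ∧ (∑ i : Fin k, (if (ω i).2 then (1:ℝ) else 0)) = p₂ * k
          ∧ (∑ i : Fin k, (if (ω i).1 && (ω i).2 then (1:ℝ) else 0))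
              = ((⌈p * k⌉ : ℤ) : ℝ)} := by
    intro f hf
    rw [hF] at hf
    obtain ⟨x, hx, rfl⟩ := Finset.mem_image.mp (by exact_mod_cast hf)
    obtain ⟨hScard, hAsub, hAcard, hCsub, hCcard⟩ := hmemT x hx
    have hdisj : Disjoint x.2.1 x.2.2 := by
      rw [Finset.disjoint_left]
      intro i hiA hiC
      exact (Finset.mem_compl.mp (hCsub hiC)) (hAsub hiA)
    refine ⟨?_, ?_, ?_⟩
    · calc ∑ i : Fin k, (if (Φ x.1 x.2.1 x.2.2 i).1 then (1:ℝ) else 0)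
          = ∑ i : Fin k, (if i ∈ x.1 then (1:ℝ) else 0) := by
            apply Finset.sum_congr rfl
            intro i _
            simp [hΦ]
        _ = x.1.card := by
            rw [Finset.sum_ite_mem, Finset.univ_inter, Finset.sum_const, nsmul_eq_mul,
              mul_one]
        _ = p₁ * k := by rw [hScard, hm₁]
    · calc ∑ i : Fin k, (if (Φ x.1 x.2.1 x.2.2 i).2 then (1:ℝ) else 0)
          = ∑ i : Fin k, (if i ∈ x.2.1 ∪ x.2.2 then (1:ℝ) else 0) := by
            apply Finset.sum_congr rfl
            intro i _
            simp [hΦ]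
        _ = ((x.2.1 ∪ x.2.2).card : ℝ) := by
            rw [Finset.sum_ite_mem, Finset.univ_inter, Finset.sum_const, nsmul_eq_mul,
              mul_one]
        _ = p₂ * k := by
            rw [Finset.card_union_of_disjoint hdisj, hAcard, hCcard]
            have : a + c = m₂ := by omega
            rw [this, hm₂]
    · calc ∑ i : Fin k, (if (Φ x.1 x.2.1 x.2.2 i).1 && (Φ x.1 x.2.1 x.2.2 i).2
            then (1:ℝ) else 0)
          = ∑ i : Fin k, (if i ∈ x.2.1 then (1:ℝ) else 0) := by
            apply Finset.sum_congr rfl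
            intro i _
            have hcond : ((Φ x.1 x.2.1 x.2.2 i).1 && (Φ x.1 x.2.1 x.2.2 i).2) = true
                ↔ i ∈ x.2.1 := by
              simp only [hΦ, Bool.and_eq_true, decide_eq_true_eq, Finset.mem_union]
              constructor
              · rintro ⟨hS, hA | hC⟩
                · exact hA
                · exact absurd hS (Finset.mem_compl.mp (hCsub hC))
              · intro hi
                exact ⟨hAsub hi, Or.inl hi⟩
            rw [if_congr hcond rfl rfl]
        _ = ((x.2.1.card : ℕ) : ℝ) := by
            rw [Finset.sum_ite_mem, Finset.univ_inter, Finset.sum_const, nsmul_eq_mul,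
              mul_one]
        _ = ((⌈p * k⌉ : ℤ) : ℝ) := by rw [hAcard, haR]
  -- putting everything together
  have hineq : ENNReal.ofReal ((1 / 400) * (k : ℝ) ^ (-(3.5 : ℝ)))
      ≤ (T.card : ℝ≥0∞) * V := by
    have hVeq : (T.card : ℝ≥0∞) * V
        = ENNReal.ofReal ((T.card : ℝ) * (p^a * ((p₁-p)^(m₁-a)
            * ((p₂-p)^c * (1-p₁-p₂+p)^(k-m₁-c))))) := by
      rw [ENNReal.ofReal_mul (by positivity), ENNReal.ofReal_natCast,
        ENNReal.ofReal_mul (pow_nonneg hp0 a),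
        ENNReal.ofReal_mul (pow_nonneg (by linarith : (0:ℝ) ≤ p₁ - p) (m₁-a)),
        ENNReal.ofReal_mul (pow_nonneg (by linarith : (0:ℝ) ≤ p₂ - p) c),
        ENNReal.ofReal_pow hp0, ENNReal.ofReal_pow (by linarith),
        ENNReal.ofReal_pow (by linarith), ENNReal.ofReal_pow hp22, hV]
    rw [hVeq]
    apply ENNReal.ofReal_le_ofReal
    have hAM := analytic_main k hk p p₁ p₂ ⟨hp10, hp11⟩ ⟨hp20, hp21⟩ ⟨hp0, hpone⟩
      hcorr hpp1 hpp2 hp22 m₁ m₂ hm₁ hm₂ a ha c hc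
    have hk1R : (1:ℝ) ≤ k := by exact_mod_cast hk
    have hrp : (k:ℝ) ^ (-(3.5:ℝ)) ≤ ((k:ℝ)^(3:ℕ))⁻¹ := by
      have h1 : (k:ℝ) ^ (-(3.5:ℝ)) ≤ (k:ℝ) ^ (-(3:ℝ)) :=
        Real.rpow_le_rpow_of_exponent_le hk1R (by norm_num)
      have h2 : (k:ℝ) ^ (-(3:ℝ)) = ((k:ℝ)^(3:ℕ))⁻¹ := by
        rw [Real.rpow_neg (by positivity), show ((3:ℝ)) = ((3:ℕ):ℝ) by norm_num,
          Real.rpow_natCast]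
      linarith [h2 ▸ h1]
    calc (1/400) * (k:ℝ) ^ (-(3.5:ℝ))
        ≤ (1/400) * ((k:ℝ)^(3:ℕ))⁻¹ := by
          apply mul_le_mul_of_nonneg_left hrp (by norm_num)
      _ ≤ 1/(64*(k:ℝ)^3) := by
          rw [show 1/(64*(k:ℝ)^3) = (1/64) * ((k:ℝ)^(3:ℕ))⁻¹ by ring]
          apply mul_le_mul_of_nonneg_right (by norm_num) (by positivity)
      _ ≤ (k.choose m₁ : ℝ) * (m₁.choose a : ℝ) * ((k-m₁).choose c : ℝ)
            * p^a * (p₁-p)^(m₁-a) * (p₂-p)^c * (1-p₁-p₂+p)^(k-m₁-c) := hAM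
      _ = (T.card : ℝ) * (p^a * ((p₁-p)^(m₁-a)
            * ((p₂-p)^c * (1-p₁-p₂+p)^(k-m₁-c)))) := by
          rw [hcardT]
          push_cast
          ring
  calc ENNReal.ofReal ((1 / 400) * (k : ℝ) ^ (-(3.5 : ℝ)))
      ≤ (T.card : ℝ≥0∞) * V := hineq
    _ = (Measure.pi fun _ : Fin k => μ) ↑F := hmeasF.symm
    _ ≤ _ := measure_mono hsub
end

section
/- Let X₁,…,X_k ∈ {0,1}² be i.i.d. 2-dimensional Bernoulli random vectors with Pr[X=(1,1)]=p, Pr[X=(1,0)]=p₁−p, Pr[X=(0,1)]=p₂−p, Pr[X=(0,0)]=1−p₁−p₂+p, where p ≥ p₁p₂ (positively correlated coordinates) and p₁k, p₂k are integers. Let S_l = ∑_{i∈[l]} (X_i − (p₁,p₂)) be the centered random walk. Then Pr[for all l ∈ [k]: S_l ≤ 0 coordinatewise] ≥ 1/(400·k^{6.5}). -/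
/-!
Each coordinate walk is handled by the cycle lemma: if `p k = m` is an integer, every 0/1 word
with exactly `m` ones has a cyclic rotation whose centred walk stays `≤ 0` (start the word at a
maximum of its walk), so at least a `1/k` fraction of those words qualify; and `m` is the mode
of `Binomial(k, p)`, so `Pr[S_k = 0] ≥ 1/(k+1)`. Hence each coordinate stays `≤ 0` with
probability at least `1/(k(k+1))`.

Staying `≤ 0` is a decreasing event in the product lattice `({0,1}²)^k`, and `p ≥ p₁p₂` is
exactly log-supermodularity of the law of `X` on the lattice `{0,1}²`, a property inherited by
product measures. The Harris–FKG inequality therefore bounds the probability that both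
coordinates stay `≤ 0` below by the product `1/(k(k+1))² ≥ 1/(400 k^{6.5})`.
-/

open MeasureTheory Finset

section Harris

variable {α : Type*} [MeasurableSpace α]

def IsLogSupermodular [Lattice α] (ν : Measure α) : Prop :=
  ∀ a b, ν.real {a} * ν.real {b} ≤ ν.real {a ⊓ b} * ν.real {a ⊔ b}

lemma measureReal_pi_singleton {ι : Type*} [Fintype ι] (ν : Measure α) [IsFiniteMeasure ν]
    (ω : ι → α) : (Measure.pi fun _ : ι => ν).real {ω} = ∏ i, ν.real {ω i} := by
  simp [measureReal_def, ENNReal.toReal_prod]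

theorem IsLogSupermodular.pi [Lattice α] {ι : Type*} [Fintype ι] {ν : Measure α}
    [IsFiniteMeasure ν] (hν : IsLogSupermodular ν) :
    IsLogSupermodular (Measure.pi fun _ : ι => ν) := by
  intro a b
  simp only [measureReal_pi_singleton, ← prod_mul_distrib]
  exact prod_le_prod (fun i _ => mul_nonneg measureReal_nonneg measureReal_nonneg)
    fun i _ => hν (a i) (b i)

variable [Fintype α] [MeasurableSingletonClass α]

lemma measureReal_eq_sum_mul_indicator (ν : Measure α) [IsFiniteMeasure ν] (A : Set α) :
    ν.real A = ∑ a, ν.real {a} * A.indicator 1 a := by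
  classical
  simp [Set.indicator_apply, ← sum_filter]

/-- The Harris–FKG inequality for decreasing events. -/
theorem IsLogSupermodular.measureReal_mul_le_of_isLowerSet [DistribLattice α] {ν : Measure α}
    [IsProbabilityMeasure ν] (hν : IsLogSupermodular ν) {A B : Set α} (hA : IsLowerSet A)
    (hB : IsLowerSet B) :
    ν.real A * ν.real B ≤ ν.real (A ∩ B) := by
  have hmono : ∀ {C : Set α}, IsLowerSet C →
      Monotone fun a : αᵒᵈ => C.indicator (1 : α → ℝ) (OrderDual.ofDual a) := by
    intro C hC a b hab
    by_cases h : OrderDual.ofDual a ∈ C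
    · simp [h, hC (show OrderDual.ofDual b ≤ OrderDual.ofDual a from hab) h]
    · simp [h, Set.indicator_nonneg]
  -- Lower sets of `α` are upper sets of `αᵒᵈ`, where `fkg` applies.
  have key : (∑ a, ν.real {a} * A.indicator 1 a) * ∑ a, ν.real {a} * B.indicator 1 a
      ≤ (∑ a, ν.real {a}) * ∑ a, ν.real {a} * (A.indicator 1 a * B.indicator 1 a) :=
    fkg (α := αᵒᵈ) _ _ (fun a => ν.real {OrderDual.ofDual a}) (fun _ => measureReal_nonneg)
      (fun _ => Set.indicator_nonneg (fun _ _ => zero_le_one) _)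
      (fun _ => Set.indicator_nonneg (fun _ _ => zero_le_one) _) (hmono hA) (hmono hB)
      (fun a b => (hν a b).trans_eq (mul_comm _ _))
  simp_rw [sum_measureReal_singleton, coe_univ, probReal_univ, one_mul,
    ← Pi.mul_apply (A.indicator 1), ← Set.inter_indicator_one,
    ← measureReal_eq_sum_mul_indicator] at key
  exact key

end Harris

lemma isLogSupermodular_bool_prod_of_mul_le_mul {ν : Measure (Bool × Bool)}
    (h : ν.real {(true, false)} * ν.real {(false, true)}
      ≤ ν.real {(false, false)} * ν.real {(true, true)}) :
    IsLogSupermodular ν := by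
  rintro ⟨_ | _, _ | _⟩ ⟨_ | _, _ | _⟩ <;> simp [Prod.inf_def, Prod.sup_def] <;> linarith

lemma map_measureReal_singleton_eq_sum {α β : Type*} [Fintype α] [MeasurableSpace α]
    [MeasurableSingletonClass α] [MeasurableSpace β] [MeasurableSingletonClass β]
    [DecidableEq β] (ν : Measure α) [IsFiniteMeasure ν] (f : α → β) (b : β) :
    (ν.map f).real {b} = ∑ a with f a = b, ν.real {a} := by
  rw [map_measureReal_apply .of_discrete (measurableSet_singleton b), sum_measureReal_singleton]
  simp [Set.preimage]

lemma choose_succ_mul_pow_mul_pow_mul {k j : ℕ} (hj : j < k) (p : ℝ) :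
    k.choose (j + 1) * p ^ (j + 1) * (1 - p) ^ (k - (j + 1)) * ((j + 1) * (1 - p))
      = k.choose j * p ^ j * (1 - p) ^ (k - j) * ((k - j) * p) := by
  have hc : (k.choose (j + 1) : ℝ) * (j + 1) = k.choose j * (k - j) := by
    rw [← Nat.cast_sub hj.le]
    exact_mod_cast Nat.choose_succ_right_eq k j
  obtain ⟨r, hr⟩ : ∃ r, k - j = r + 1 := ⟨k - (j + 1), by omega⟩
  rw [hr, show k - (j + 1) = r by omega, pow_succ, pow_succ]
  linear_combination (p ^ j * p * (1 - p) ^ r * (1 - p)) * hc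

theorem choose_mul_pow_mul_pow_le_of_natCast_eq_mul {k m : ℕ} {p : ℝ} (hp0 : 0 ≤ p)
    (hp1 : p ≤ 1) (hm : (m : ℝ) = p * k) (j : ℕ) :
    k.choose j * p ^ j * (1 - p) ^ (k - j) ≤ k.choose m * p ^ m * (1 - p) ^ (k - m) := by
  set f : ℕ → ℝ := fun j => k.choose j * p ^ j * (1 - p) ^ (k - j)
  have hq0 : 0 ≤ 1 - p := by linarith
  have hf0 : ∀ j, 0 ≤ f j := fun j => by positivity
  have hratio : ∀ j < k, f (j + 1) * ((j + 1) * (1 - p)) = f j * ((k - j) * p) :=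
    fun j hj => choose_succ_mul_pow_mul_pow_mul hj p
  have hmk : (m : ℝ) ≤ k := by rw [hm]; exact mul_le_of_le_one_left k.cast_nonneg hp1
  -- `hratio` shows that `f` increases while `j + 1 - p ≤ m` and decreases while `m ≤ j + 1 - p`.
  have hup : ∀ j < m, f j ≤ f (j + 1) := by
    intro j hj
    have hjm : (j : ℝ) + 1 ≤ m := by exact_mod_cast hj
    have hpos : 0 < (k - j) * p := mul_pos (by linarith) (by nlinarith)
    refine le_of_mul_le_mul_right ?_ hpos
    rw [← hratio j (by exact_mod_cast (show (j : ℝ) < k by linarith))]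
    exact mul_le_mul_of_nonneg_left (by nlinarith) (hf0 _)
  have hdown : ∀ j ≥ m, f (j + 1) ≤ f j := by
    intro j hj
    rcases lt_or_ge j k with hjk | hjk
    · have hmj : (m : ℝ) ≤ j := by exact_mod_cast hj
      have hjk' : (j : ℝ) + 1 ≤ k := by exact_mod_cast hjk
      have hpos : 0 < (j + 1) * (1 - p) := mul_pos (by positivity) (by nlinarith)
      refine le_of_mul_le_mul_right ?_ hpos
      rw [hratio j hjk]
      exact mul_le_mul_of_nonneg_left (by nlinarith) (hf0 _)
    · simp [f, Nat.choose_eq_zero_of_lt (Nat.lt_succ_of_le hjk), hf0 j]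
  rcases le_total j m with hjm | hjm
  · have hmono : Monotone fun n => f (min n m) := monotone_nat_of_le_succ fun n => by
      rcases lt_or_ge n m with h | h
      · simpa [min_eq_left h.le, min_eq_left (Nat.succ_le_of_lt h)] using hup n h
      · simp [min_eq_right h, min_eq_right (h.trans n.le_succ)]
    simpa [min_eq_left hjm] using hmono hjm
  · exact antitoneOn_nat_Ici_of_succ_le hdown (le_refl m) hjm hjm

theorem one_le_succ_mul_choose_mul_pow_mul_pow {k m : ℕ} {p : ℝ} (hp0 : 0 ≤ p) (hp1 : p ≤ 1)
    (hm : (m : ℝ) = p * k) :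
    1 ≤ (k + 1) * (k.choose m * p ^ m * (1 - p) ^ (k - m)) :=
  calc (1 : ℝ) = (p + (1 - p)) ^ k := by simp
    _ = ∑ j ∈ range (k + 1), k.choose j * p ^ j * (1 - p) ^ (k - j) := by
        rw [add_pow]
        exact sum_congr rfl fun j _ => by ring
    _ ≤ ∑ _j ∈ range (k + 1), k.choose m * p ^ m * (1 - p) ^ (k - m) :=
        sum_le_sum fun j _ => choose_mul_pow_mul_pow_le_of_natCast_eq_mul hp0 hp1 hm j
    _ = (k + 1) * (k.choose m * p ^ m * (1 - p) ^ (k - m)) := by simp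

/-- The cycle lemma. -/
theorem Function.Periodic.exists_forall_sum_range_add_nonpos {M : Type*} [AddCommGroup M]
    [LinearOrder M] [IsOrderedAddMonoid M] {x : ℕ → M} {k : ℕ} (hx : Function.Periodic x k)
    (hk : 0 < k) (hsum : ∑ i ∈ range k, x i = 0) :
    ∃ s < k, ∀ j, ∑ i ∈ range j, x (s + i) ≤ 0 := by
  set S : ℕ → M := fun t => ∑ i ∈ range t, x i
  have hS : Function.Periodic S k := fun t => by
    simp only [S, add_comm t k, sum_range_add, hsum, zero_add]
    exact sum_congr rfl fun i _ => by rw [add_comm, hx]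
  obtain ⟨s, hs, hmax⟩ := exists_max_image (range k) S ⟨0, mem_range.2 hk⟩
  refine ⟨s, mem_range.1 hs, fun j => ?_⟩
  have := hmax _ (mem_range.2 (Nat.mod_lt (s + j) hk))
  rw [hS.map_mod_nat, show S (s + j) = S s + ∑ i ∈ range j, x (s + i) from sum_range_add x s j]
    at this
  simpa using this

section Walks

open Fin.NatCast

def nonposWalks (k : ℕ) (p : ℝ) : Set (Fin k → Bool) :=
  {b | ∀ l, 1 ≤ l → l ≤ k →
    ∑ i ∈ univ.filter (fun i : Fin k => (i : ℕ) < l), ((if b i then (1 : ℝ) else 0) - p)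
      ≤ 0}

lemma isLowerSet_nonposWalks (k : ℕ) (p : ℝ) : IsLowerSet (nonposWalks k p) := by
  intro b c hcb hb l hl hlk
  refine le_trans (sum_le_sum fun i _ => ?_) (hb l hl hlk)
  have := hcb i
  gcongr
  revert this; cases b i <;> cases c i <;> simp

lemma sum_filter_val_lt_eq_sum_range {M : Type*} [AddCommMonoid M] {k l : ℕ} [NeZero k]
    (hl : l ≤ k) (f : Fin k → M) :
    ∑ i ∈ univ.filter (fun i : Fin k => (i : ℕ) < l), f i = ∑ t ∈ range l, f t := by
  have hval : ∀ t ∈ range l, ((t : Fin k) : ℕ) = t := fun t ht =>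
    Fin.val_cast_of_lt ((mem_range.1 ht).trans_le hl)
  refine sum_nbij' (↑) (↑) (fun i hi => by simpa using hi) (fun t ht => ?_)
    (fun i _ => Fin.cast_val_eq_self i) hval (fun i _ => by rw [Fin.cast_val_eq_self])
  simpa [hval t ht] using ht

lemma exists_add_mem_nonposWalks {k : ℕ} [NeZero k] {p : ℝ} {b : Fin k → Bool}
    (hb : (#{i | b i} : ℝ) = p * k) :
    ∃ s : Fin k, (fun i => b (i + s)) ∈ nonposWalks k p := by
  set g : Fin k → ℝ := fun i => (if b i then 1 else 0) - p
  have hx : Function.Periodic (fun t : ℕ => g t) k := fun t => by simp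
  have hsum : ∑ t ∈ range k, g t = 0 := by
    rw [← Fin.sum_univ_eq_sum_range (fun t => g t)]
    simp [g, sum_sub_distrib, hb, mul_comm]
  obtain ⟨s, hs, hneg⟩ := hx.exists_forall_sum_range_add_nonpos (NeZero.pos k) hsum
  refine ⟨s, fun l _ hl => ?_⟩
  rw [sum_filter_val_lt_eq_sum_range hl]
  refine (sum_congr rfl fun t _ => ?_).trans_le (hneg l)
  simp [g, add_comm (t : Fin k)]

lemma card_filter_card_eq_choose (k m : ℕ) :
    #{b : Fin k → Bool | #{i | b i} = m} = k.choose m := by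
  rw [← card_fin k, ← card_powersetCard m (univ : Finset (Fin k)), card_fin]
  refine card_nbij' (fun b => ({i | b i} : Finset (Fin k))) (fun s i => i ∈ s) (fun b hb => ?_)
    (fun s hs => ?_) (fun b _ => ?_) (fun s _ => ?_)
  · simpa using hb
  · simp_all
  · ext; simp
  · ext; simp

open scoped Classical in
lemma card_filter_card_eq_le_mul_card_nonposWalks {k m : ℕ} [NeZero k] {p : ℝ}
    (hm : (m : ℝ) = p * k) :
    #{b : Fin k → Bool | #{i | b i} = m}
      ≤ k * #{b : Fin k → Bool | #{i | b i} = m ∧ b ∈ nonposWalks k p} := by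
  set G := ({b : Fin k → Bool | #{i | b i} = m ∧ b ∈ nonposWalks k p} : Finset _)
  have hcount : ∀ (b : Fin k → Bool) (s : Fin k), #{i | b (i + s)} = #{i | b i} := fun b s =>
    card_equiv (Equiv.addRight s) (by simp)
  calc #{b : Fin k → Bool | #{i | b i} = m}
      ≤ #(univ.biUnion fun s : Fin k => G.image fun c i => c (i - s)) := by
        refine card_le_card fun b hbW => ?_
        have hb : #{i | b i} = m := by simpa using hbW
        obtain ⟨s, hs⟩ := exists_add_mem_nonposWalks (b := b) (p := p) (by rw [hb, hm])
        simp only [mem_biUnion, mem_univ, true_and, mem_image]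
        exact ⟨s, fun i => b (i + s), by simp [G, hcount, hb, hs], by simp⟩
    _ ≤ k * #G := (card_biUnion_le_card_mul _ _ _ fun s _ => card_image_le).trans_eq (by simp)

lemma measureReal_pi_bool_singleton {k : ℕ} {ν : Measure Bool} [IsProbabilityMeasure ν]
    {p : ℝ} (hp : ν.real {true} = p) (b : Fin k → Bool) :
    (Measure.pi fun _ : Fin k => ν).real {b} = p ^ #{i | b i} * (1 - p) ^ (k - #{i | b i}) := by
  have hν : ∀ β, ν.real {β} = if β then p else 1 - p := by
    rintro (_ | _)
    · rw [← hp, ← probReal_compl_eq_one_sub (measurableSet_singleton _), Bool.compl_singleton]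
      rfl
    · exact hp
  have hk := card_filter_add_card_filter_not (s := univ) fun i => b i
  rw [card_univ, Fintype.card_fin] at hk
  simp_rw [measureReal_pi_singleton, hν, prod_ite, prod_const, ← hk, Nat.add_sub_cancel_left]

open scoped Classical in
theorem one_div_le_measureReal_nonposWalks {k : ℕ} (hk : 0 < k) {ν : Measure Bool}
    [IsProbabilityMeasure ν] {p : ℝ} (hp : ν.real {true} = p) {m : ℕ}
    (hm : (m : ℝ) = p * k) :
    1 / (k * (k + 1)) ≤ (Measure.pi fun _ : Fin k => ν).real (nonposWalks k p) := by
  have : NeZero k := ⟨hk.ne'⟩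
  set P := Measure.pi fun _ : Fin k => ν
  set G := ({b : Fin k → Bool | #{i | b i} = m ∧ b ∈ nonposWalks k p} : Finset _)
  have hp0 : 0 ≤ p := hp ▸ measureReal_nonneg
  have hp1 : p ≤ 1 := hp ▸ measureReal_le_one
  have hG : P.real G = #G * (p ^ m * (1 - p) ^ (k - m)) := by
    rw [← sum_measureReal_singleton, ← nsmul_eq_mul, ← sum_const]
    refine sum_congr rfl fun b hb => ?_
    rw [measureReal_pi_bool_singleton hp, (mem_filter.1 hb).2.1]
  have hcard : (k.choose m : ℝ) ≤ k * #G := by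
    exact_mod_cast (card_filter_card_eq_choose k m).symm.trans_le
      (card_filter_card_eq_le_mul_card_nonposWalks hm)
  have hGsub : P.real G ≤ P.real (nonposWalks k p) :=
    measureReal_mono fun b hb => (mem_filter.1 hb).2.2
  have hk0 : (0 : ℝ) < k := by exact_mod_cast hk
  rw [div_le_iff₀ (by positivity)]
  calc (1 : ℝ) ≤ (k + 1) * (k.choose m * p ^ m * (1 - p) ^ (k - m)) :=
        one_le_succ_mul_choose_mul_pow_mul_pow hp0 hp1 hm
    _ ≤ (k + 1) * (k * #G * (p ^ m * (1 - p) ^ (k - m))) := by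
        rw [mul_assoc (k.choose m : ℝ)]
        gcongr
    _ = P.real G * (k * (k + 1)) := by rw [hG]; ring
    _ ≤ P.real (nonposWalks k p) * (k * (k + 1)) := by gcongr

lemma isLowerSet_preimage_nonposWalks {α : Type*} [Preorder α] {f : α → Bool} (hf : Monotone f)
    (k : ℕ) (p : ℝ) :
    IsLowerSet ((fun (ω : Fin k → α) i => f (ω i)) ⁻¹' nonposWalks k p) :=
  fun _ _ hba ha => isLowerSet_nonposWalks k p (fun i => hf (hba i)) ha

theorem one_div_le_measureReal_preimage_nonposWalks {α : Type*} [Fintype α] [MeasurableSpace α]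
    [MeasurableSingletonClass α] {k : ℕ} (hk : 0 < k) (μ : Measure α) [IsProbabilityMeasure μ]
    {f : α → Bool} {p : ℝ} (hp : (μ.map f).real {true} = p) {m : ℕ}
    (hm : (m : ℝ) = p * k) :
    1 / (k * (k + 1))
      ≤ (Measure.pi fun _ : Fin k => μ).real ((fun ω i => f (ω i)) ⁻¹' nonposWalks k p) := by
  have := Measure.isProbabilityMeasure_map (μ := μ) (f := f) Measurable.of_discrete.aemeasurable
  rw [← map_measureReal_apply .of_discrete (Set.toFinite _).measurableSet,
    Measure.pi_map_pi fun _ => Measurable.of_discrete.aemeasurable]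
  exact one_div_le_measureReal_nonposWalks hk hp hm

end Walks

lemma one_div_four_hundred_mul_rpow_le_sq (k : ℕ) (hk : 0 < k) :
    1 / (400 * (k : ℝ) ^ (6.5 : ℝ)) ≤ (1 / (k * (k + 1))) ^ 2 := by
  have hk1 : (1 : ℝ) ≤ k := by exact_mod_cast hk
  have h4 : (k : ℝ) ^ (4 : ℕ) ≤ (k : ℝ) ^ (6.5 : ℝ) := by
    rw [← Real.rpow_natCast]
    exact Real.rpow_le_rpow_of_exponent_le hk1 (by norm_num)
  rw [div_pow, one_pow]
  apply one_div_le_one_div_of_le (by positivity)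
  calc ((k : ℝ) * (k + 1)) ^ 2 ≤ (k * (2 * k)) ^ 2 := by gcongr; linarith
    _ ≤ 400 * (k : ℝ) ^ (6.5 : ℝ) := by nlinarith

theorem random_walk_stays_in_quadrant_general
    (k : ℕ) (hk : 0 < k) (p p₁ p₂ : ℝ)
    (hp : p ∈ Set.Icc (0:ℝ) 1)
    (hp1k : ∃ m : ℕ, (m : ℝ) = p₁ * k)
    (hp2k : ∃ m : ℕ, (m : ℝ) = p₂ * k)
    (hcorr : p₁ * p₂ ≤ p)
    (hpp1 : p ≤ p₁) (hpp2 : p ≤ p₂) (hp22 : 0 ≤ 1 - p₁ - p₂ + p)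
    (μ : Measure (Bool × Bool)) [IsProbabilityMeasure μ]
    (h11 : μ {(true, true)} = ENNReal.ofReal p)
    (h10 : μ {(true, false)} = ENNReal.ofReal (p₁ - p))
    (h01 : μ {(false, true)} = ENNReal.ofReal (p₂ - p))
    (h00 : μ {(false, false)} = ENNReal.ofReal (1 - p₁ - p₂ + p)) :
    ENNReal.ofReal (1 / (400 * (k : ℝ) ^ (6.5 : ℝ)))
      ≤ (Measure.pi fun _ : Fin k => μ)
          {ω | ∀ l, 1 ≤ l → l ≤ k →
              (∑ i ∈ Finset.univ.filter (fun i : Fin k => (i : ℕ) < l),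
                  ((if (ω i).1 then (1:ℝ) else 0) - p₁)) ≤ 0
            ∧ (∑ i ∈ Finset.univ.filter (fun i : Fin k => (i : ℕ) < l),
                  ((if (ω i).2 then (1:ℝ) else 0) - p₂)) ≤ 0} := by
  obtain ⟨m₁, hm₁⟩ := hp1k
  obtain ⟨m₂, hm₂⟩ := hp2k
  have hreal : ∀ {x : Bool × Bool} {r : ℝ},
      μ {x} = ENNReal.ofReal r → 0 ≤ r → μ.real {x} = r :=
    fun hx hr => by rw [measureReal_def, hx, ENNReal.toReal_ofReal hr]
  have h11 := hreal h11 hp.1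
  have h10 := hreal h10 (sub_nonneg.2 hpp1)
  have h01 := hreal h01 (sub_nonneg.2 hpp2)
  have hμ : IsLogSupermodular μ := isLogSupermodular_bool_prod_of_mul_le_mul <| by
    rw [h10, h01, hreal h00 hp22, h11]
    linarith
  have h₁ := one_div_le_measureReal_preimage_nonposWalks hk μ (f := Prod.fst)
    (by simp [map_measureReal_singleton_eq_sum, sum_filter, Fintype.sum_prod_type, h11, h10]) hm₁
  have h₂ := one_div_le_measureReal_preimage_nonposWalks hk μ (f := Prod.snd)
    (by simp [map_measureReal_singleton_eq_sum, sum_filter, Fintype.sum_prod_type, h11, h01]) hm₂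
  calc ENNReal.ofReal (1 / (400 * (k : ℝ) ^ (6.5 : ℝ)))
      ≤ ENNReal.ofReal ((Measure.pi fun _ : Fin k => μ).real
          ((fun ω i => (ω i).1) ⁻¹' nonposWalks k p₁
          ∩ (fun ω i => (ω i).2) ⁻¹' nonposWalks k p₂)) := by
        refine ENNReal.ofReal_le_ofReal ((one_div_four_hundred_mul_rpow_le_sq k hk).trans ?_)
        rw [sq]
        exact (mul_le_mul h₁ h₂ (by positivity) measureReal_nonneg).trans
          (hμ.pi.measureReal_mul_le_of_isLowerSet
            (isLowerSet_preimage_nonposWalks monotone_fst k p₁)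
            (isLowerSet_preimage_nonposWalks monotone_snd k p₂))
    _ = _ := by
        rw [ofReal_measureReal]
        congr 1
        ext
        simp [nonposWalks, forall_and]

/-- The probability that a centered i.i.d. Bernoulli-`2d` random walk (with positively
correlated coordinates, `p ≥ p₁p₂`, and `p₁k, p₂k ∈ ℤ`) stays coordinatewise at most `0`
at every step `l ∈ [k]` is at least `1/(400·k^{6.5})`. -/
theorem random_walk_stays_in_quadrant
    (k : ℕ) (hk : 0 < k) (p p₁ p₂ : ℝ)
    (hp1 : p₁ ∈ Set.Icc (0:ℝ) 1) (hp2 : p₂ ∈ Set.Icc (0:ℝ) 1) (hp : p ∈ Set.Icc (0:ℝ) 1)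
    (hp1k : ∃ m : ℕ, (m : ℝ) = p₁ * k)
    (hp2k : ∃ m : ℕ, (m : ℝ) = p₂ * k)
    (hcorr : p₁ * p₂ ≤ p)
    (hpp1 : p ≤ p₁) (hpp2 : p ≤ p₂) (hp22 : 0 ≤ 1 - p₁ - p₂ + p)
    (μ : Measure (Bool × Bool)) [IsProbabilityMeasure μ]
    (h11 : μ {(true, true)} = ENNReal.ofReal p)
    (h10 : μ {(true, false)} = ENNReal.ofReal (p₁ - p))
    (h01 : μ {(false, true)} = ENNReal.ofReal (p₂ - p))
    (h00 : μ {(false, false)} = ENNReal.ofReal (1 - p₁ - p₂ + p)) :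
    ENNReal.ofReal (1 / (400 * (k : ℝ) ^ (6.5 : ℝ)))
      ≤ (Measure.pi fun _ : Fin k => μ)
          {ω | ∀ l, 1 ≤ l → l ≤ k →
              (∑ i ∈ Finset.univ.filter (fun i : Fin k => (i : ℕ) < l),
                  ((if (ω i).1 then (1:ℝ) else 0) - p₁)) ≤ 0
            ∧ (∑ i ∈ Finset.univ.filter (fun i : Fin k => (i : ℕ) < l),
                  ((if (ω i).2 then (1:ℝ) else 0) - p₂)) ≤ 0} :=
  random_walk_stays_in_quadrant_general k hk p p₁ p₂ hp hp1k hp2k hcorr hpp1 hpp2 hp22 μ h11 h10 h01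
    h00
end

section
/- Let f : {0,1}^n → ℝ, let p ∈ (0,1), and let 1 > α ≥ β > 0. Then (⟨T_α^{(p)} f, f⟩_p / ‖f‖_{L₂(p)}²)^{1/log(1/α)} ≤ (⟨T_β^{(p)} f, f⟩_p / ‖f‖_{L₂(p)}²)^{1/log(1/β)}, where f is assumed not identically zero. -/
open scoped BigOperators

/-- The `p`-biased product measure weight of a point `x ∈ {0,1}ⁿ`. -/
noncomputable def biasedWeight (p : ℝ) {n : ℕ} (x : Fin n → Bool) : ℝ :=
  ∏ i, if x i then p else 1 - p

/-- The `p`-biased Fourier character `φ_S^{(p)}`. -/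
noncomputable def biasedChar (p : ℝ) {n : ℕ} (S : Finset (Fin n)) (x : Fin n → Bool) : ℝ :=
  ∏ i ∈ S, ((if x i then (1:ℝ) else 0) - p) / Real.sqrt (p * (1 - p))

/-- The `p`-biased Fourier coefficient `f̂^{(p)}(S)`. -/
noncomputable def biasedCoeff (p : ℝ) {n : ℕ} (f : (Fin n → Bool) → ℝ)
    (S : Finset (Fin n)) : ℝ :=
  ∑ x, biasedWeight p x * f x * biasedChar p S x

/-!
Writing `α = e^{-a}` and `β = e^{-b}` with `0 < a ≤ b`, both sides are `L^a` and `L^b` norms of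
the random variable `e^{-|S|}`, where `S` is drawn with probability `f̂(S)² / ‖f‖²` (a probability
distribution by Parseval). The inequality is therefore the monotonicity of power means, i.e.
Jensen's inequality for `t ↦ t^{b/a}`.
-/

open Finset Real

noncomputable def biasedCoord (p : ℝ) (b : Bool) : ℝ :=
  ((if b then (1:ℝ) else 0) - p) / Real.sqrt (p * (1 - p))

section BiasedFourier

variable {n : ℕ} {p : ℝ}

theorem biasedChar_eq_prod (S : Finset (Fin n)) (x : Fin n → Bool) :
    biasedChar p S x = ∏ i ∈ S, biasedCoord p (x i) :=
  rfl

theorem biasedWeight_pos (hp : p ∈ Set.Ioo 0 1) (x : Fin n → Bool) : 0 < biasedWeight p x :=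
  prod_pos fun i _ => by cases x i <;> simp [hp.1, hp.2]

theorem biasedCoord_mul_add_one (hp : p ∈ Set.Ioo 0 1) (b c : Bool) :
    biasedCoord p b * biasedCoord p c + 1 = if b = c then (if b then p else 1 - p)⁻¹ else 0 := by
  obtain ⟨hp0, hp1⟩ := hp
  have hq : 1 - p ≠ 0 := by linarith
  rw [biasedCoord, biasedCoord, div_mul_div_comm, Real.mul_self_sqrt (by nlinarith)]
  cases b <;> cases c <;> simp <;> field_simp <;> ring

theorem sum_biasedChar_mul_biasedChar (hp : p ∈ Set.Ioo 0 1) (x y : Fin n → Bool) :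
    ∑ S, biasedChar p S x * biasedChar p S y = if x = y then (biasedWeight p x)⁻¹ else 0 := by
  have hexpand : ∑ S, biasedChar p S x * biasedChar p S y
      = ∏ i, (biasedCoord p (x i) * biasedCoord p (y i) + 1) := by
    simp only [biasedChar_eq_prod, ← prod_mul_distrib, prod_add_one, powerset_univ]
  rw [hexpand]
  simp only [biasedCoord_mul_add_one hp]
  split_ifs with hxy
  · subst hxy
    simp [biasedWeight, prod_inv_distrib]
  · obtain ⟨i, hi⟩ := Function.ne_iff.mp hxy
    exact prod_eq_zero (mem_univ i) (if_neg hi)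

theorem sum_biasedCoeff_mul_biasedChar (hp : p ∈ Set.Ioo 0 1) (f : (Fin n → Bool) → ℝ)
    (x : Fin n → Bool) : ∑ S, biasedCoeff p f S * biasedChar p S x = f x := by
  have hterm : ∀ y, ∑ S, biasedWeight p y * f y * biasedChar p S y * biasedChar p S x
      = if y = x then f y else 0 := by
    intro y
    simp only [mul_assoc, ← mul_sum, sum_biasedChar_mul_biasedChar hp]
    split_ifs with hyx
    · rw [mul_comm, mul_assoc, inv_mul_cancel₀ (biasedWeight_pos hp y).ne', mul_one]
    · simp
  simp only [biasedCoeff, sum_mul]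
  rw [sum_comm]
  simp [hterm]

theorem sum_biasedCoeff_sq (hp : p ∈ Set.Ioo 0 1) (f : (Fin n → Bool) → ℝ) :
    ∑ S, biasedCoeff p f S ^ 2 = ∑ x, biasedWeight p x * f x ^ 2 :=
  calc ∑ S, biasedCoeff p f S ^ 2
      = ∑ S, biasedCoeff p f S * ∑ x, biasedWeight p x * f x * biasedChar p S x := by
        simp only [sq]
        rfl
    _ = ∑ S, ∑ x, biasedWeight p x * f x * (biasedCoeff p f S * biasedChar p S x) := by
        refine sum_congr rfl fun S _ => ?_
        rw [mul_sum]
        exact sum_congr rfl fun x _ => by ring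
    _ = ∑ x, biasedWeight p x * f x * f x := by
        rw [sum_comm]
        simp only [← mul_sum, sum_biasedCoeff_mul_biasedChar hp]
    _ = ∑ x, biasedWeight p x * f x ^ 2 := by simp only [mul_assoc, sq]

end BiasedFourier

theorem antitoneOn_rpow_one_div_log_sum_pow_mul_div {ι : Type*} (s : Finset ι) (k : ι → ℕ)
    {c : ι → ℝ} (hc : ∀ i ∈ s, 0 ≤ c i) :
    AntitoneOn (fun ρ : ℝ => ((∑ i ∈ s, ρ ^ k i * c i) / ∑ i ∈ s, c i) ^ (1 / log (1 / ρ)))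
      (Set.Ioo 0 1) := by
  intro β ⟨hβ0, _⟩ α ⟨hα0, hα1⟩ hβα
  dsimp only
  have hlogα : 0 < log (1 / α) := log_pos (by rw [lt_div_iff₀ hα0]; linarith)
  set C := ∑ i ∈ s, c i
  -- With no mass, `x / 0 = 0` makes both sides `0 ^ _ = 0`.
  obtain hC | hC : 0 = C ∨ 0 < C := (sum_nonneg hc).eq_or_lt
  · rw [← hC, div_zero, div_zero, zero_rpow (one_div_pos.2 hlogα).ne']
    exact rpow_nonneg le_rfl _
  set r := logb α β
  have hr : 1 ≤ r := (le_logb_iff_rpow_le_of_base_lt_one hα0 hα1 hβ0).2 (by simpa using hβα)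
  have hpow : ∀ i, (α ^ k i : ℝ) ^ r = β ^ k i := fun i => by
    rw [← rpow_natCast, ← rpow_mul hα0.le, mul_comm, rpow_mul hα0.le, rpow_logb hα0 hα1.ne hβ0,
      rpow_natCast]
  have hmean : ∀ ρ : ℝ, ∑ i ∈ s, c i / C * ρ ^ k i = (∑ i ∈ s, ρ ^ k i * c i) / C := fun ρ => by
    rw [sum_div]
    exact sum_congr rfl fun i _ => by ring
  have hjensen := arith_mean_le_rpow_mean s (fun i => c i / C) (fun i => α ^ k i)
    (fun i hi => div_nonneg (hc i hi) hC.le) (by rw [← sum_div, div_self hC.ne'])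
    (fun i _ => by positivity) hr
  simp only [hpow, hmean] at hjensen
  have hmean_nonneg : ∀ ρ : ℝ, 0 ≤ ρ → 0 ≤ (∑ i ∈ s, ρ ^ k i * c i) / C := fun ρ hρ =>
    div_nonneg (sum_nonneg fun i hi => mul_nonneg (pow_nonneg hρ _) (hc i hi)) hC.le
  have hlog : r * log (1 / α) = log (1 / β) := by
    simp only [r, logb, one_div, log_inv]
    field_simp [(log_neg hα0 hα1).ne]
  calc ((∑ i ∈ s, α ^ k i * c i) / C) ^ (1 / log (1 / α))
      ≤ (((∑ i ∈ s, β ^ k i * c i) / C) ^ (1 / r)) ^ (1 / log (1 / α)) :=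
        rpow_le_rpow (hmean_nonneg α hα0.le) hjensen (one_div_pos.2 hlogα).le
    _ = ((∑ i ∈ s, β ^ k i * c i) / C) ^ (1 / log (1 / β)) := by
        rw [← rpow_mul (hmean_nonneg β hβ0.le), ← hlog, one_div_mul_one_div]

theorem compare_correlation_general
    {n : ℕ} (f : (Fin n → Bool) → ℝ)
    (p : ℝ) (hp : p ∈ Set.Ioo (0:ℝ) 1)
    (α β : ℝ) (hβ : 0 < β) (hβα : β ≤ α) (hα : α < 1) :
    ((∑ S : Finset (Fin n), α ^ S.card * biasedCoeff p f S ^ 2)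
        / ∑ x, biasedWeight p x * f x ^ 2) ^ (1 / Real.log (1 / α))
      ≤ ((∑ S : Finset (Fin n), β ^ S.card * biasedCoeff p f S ^ 2)
        / ∑ x, biasedWeight p x * f x ^ 2) ^ (1 / Real.log (1 / β)) := by
  rw [← sum_biasedCoeff_sq hp f]
  exact antitoneOn_rpow_one_div_log_sum_pow_mul_div univ card (fun S _ => sq_nonneg _)
    ⟨hβ, hβα.trans_lt hα⟩ ⟨hβ.trans_le hβα, hα⟩ hβα

/-- Spectral comparison of noise levels: for `0 < β ≤ α < 1` and `f ≠ 0`,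
`(⟨T_α f, f⟩_p/‖f‖²)^{1/log(1/α)} ≤ (⟨T_β f, f⟩_p/‖f‖²)^{1/log(1/β)}`,
where `⟨T_ρ f, f⟩_p = ∑_S ρ^{|S|} f̂^{(p)}(S)²` and `‖f‖²_{L₂(p)} = E_{π_p^{⊗n}}[f²]`. -/
theorem compare_correlation
    {n : ℕ} (f : (Fin n → Bool) → ℝ) (hf : f ≠ 0)
    (p : ℝ) (hp : p ∈ Set.Ioo (0:ℝ) 1)
    (α β : ℝ) (hβ : 0 < β) (hβα : β ≤ α) (hα : α < 1) :
    ((∑ S : Finset (Fin n), α ^ S.card * biasedCoeff p f S ^ 2)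
        / ∑ x, biasedWeight p x * f x ^ 2) ^ (1 / Real.log (1 / α))
      ≤ ((∑ S : Finset (Fin n), β ^ S.card * biasedCoeff p f S ^ 2)
        / ∑ x, biasedWeight p x * f x ^ 2) ^ (1 / Real.log (1 / β)) :=
  compare_correlation_general f p hp α β hβ hβα hα
end
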